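/- arXiv:1904.06094 — 8 statements merged into one kernel-verified Lean document; each statement's English description precedes it below -/
import Mathlib

section
/- Let S be a commutative semiring with 0 and 1, let n ≥ 1, let Σ be an alphabet, and let u, w ∈ Σ*. The monoid identity u = w holds in UT_n(S) if and only if, for every path π in the quiver Γ_{n,Σ}, the formal polynomials f_π^u and f_π^w are equal as polynomial functions over S. -/
attribute [local instance] Classical.propDecidable

open scoped BigOperators

/-- The submonoid of upper triangular `n × n` matrices over `S`. -/
def UT (n : ℕ) (S : Type*) [CommSemiring S] : Submonoid (Matrix (Fin n) (Fin n) S) where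
  carrier := {A | ∀ i j : Fin n, j < i → A i j = 0}
  one_mem' := fun i j hij => Matrix.one_apply_ne (ne_of_gt hij)
  mul_mem' := by
    intro a b ha hb i j hij
    rw [Matrix.mul_apply]
    apply Finset.sum_eq_zero
    intro k _
    rcases lt_or_ge k i with h | h
    · rw [ha i k h, zero_mul]
    · rw [hb k j (lt_of_lt_of_le hij h), mul_zero]

/-- A path in the loop-free quiver `Γ_{n,Σ}`: a start vertex together with a list of
labelled edges, the visited vertices being strictly increasing. -/
structure QPath (n : ℕ) (A : Type*) where
  start : Fin n
  steps : List (A × Fin n)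
  chain : List.Chain' (· < ·) (start :: steps.map Prod.snd)

namespace QPath

variable {n : ℕ} {A : Type*}

/-- The `j`-th vertex visited by the path. -/
def vtx (π : QPath n A) (j : ℕ) : Fin n :=
  (π.start :: π.steps.map Prod.snd).getD j π.start

/-- The label of a path. -/
def label (π : QPath n A) : List A := π.steps.map Prod.fst

/-- The final vertex of a path. -/
def last (π : QPath n A) : Fin n := π.vtx π.steps.length

end QPath

/-- `p` is an occurrence of the path `π` in the word `w`. -/
def IsOcc {n : ℕ} {A : Type*} (π : QPath n A) (w : List A)
    (p : Fin π.steps.length → Fin w.length) : Prop :=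
  (∀ j k, j < k → p j < p k) ∧ ∀ j, w.get (p j) = (π.steps.get j).1

/-- The monomial corresponding to an occurrence. -/
noncomputable def occMonomial (S : Type*) [CommSemiring S] {n : ℕ} {A : Type*}
    (π : QPath n A) (w : List A) (p : Fin π.steps.length → Fin w.length) :
    MvPolynomial (A × Fin n) S :=
  ∏ i : Fin w.length,
    if ∃ j, p j = i then 1
    else MvPolynomial.X (w.get i, π.vtx (Finset.univ.filter (fun j => p j < i)).card)

/-- The formal polynomial `f_π^w`. -/
noncomputable def fPoly (S : Type*) [CommSemiring S] {n : ℕ} {A : Type*}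
    (π : QPath n A) (w : List A) : MvPolynomial (A × Fin n) S :=
  ∑ p ∈ Finset.univ.filter (IsOcc π w), occMonomial S π w p

namespace QPath
variable {n : ℕ} {A : Type*}

/-- The initial segment of a path consisting of its first `j` edges. -/
def take (π : QPath n A) (j : ℕ) : QPath n A :=
  ⟨π.start, π.steps.take j, by
    have h : (π.start :: (π.steps.take j).map Prod.snd) =
        (π.start :: π.steps.map Prod.snd).take (j + 1) := by
      simp [List.map_take]
    rw [h]
    exact π.chain.take _⟩

/-- The final segment of a path obtained by removing its first `j` edges. -/
def drop (π : QPath n A) (j : ℕ) : QPath n A :=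
  ⟨π.vtx j, π.steps.drop j, by
    rcases le_or_gt j π.steps.length with hj | hj
    · have hlen : j < (π.start :: π.steps.map Prod.snd).length := by
        simp; omega
      have h : π.vtx j :: (π.steps.drop j).map Prod.snd =
          (π.start :: π.steps.map Prod.snd).drop j := by
        rw [List.map_drop, List.drop_eq_getElem_cons hlen, List.drop_succ_cons]
        congr 1
        exact List.getD_eq_getElem _ _ hlen
      rw [h]
      exact π.chain.drop _
    · have h : π.steps.drop j = [] := List.drop_eq_nil_of_le (by omega)
      rw [h]
      first | exact List.isChain_singleton _ | exact List.chain'_singleton _ | simp [List.IsChain.singleton]⟩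

end QPath

/-!
Expanding the product `M_{w_1} ⋯ M_{w_m}` of upper triangular matrices, the entry `(i, j)` is a
sum over monotone walks `i = v_0 ≤ v_1 ≤ ⋯ ≤ v_m = j`. Such a walk is the same thing as a path `π`
from `i` to `j` (the strict increases of the walk) together with an occurrence of `π` in `w` (the
positions where it increases), and its weight is the product of the edge entries of `π` times the
monomial of the occurrence evaluated at the diagonal entries. So every entry is
`∑_π (edge weight of π) · f_π^w (diagonal entries)`, which gives one direction.
Conversely, given `π` and a valuation `ν`, let each letter `a` act by `ν (a, ·)` on the diagonal and
by the indicator of the `a`-labelled edges of `π` above it: every other path from `π.start` to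
`π.last` then has edge weight `0`, so the `(π.start, π.last)` entry of the image of `w` is
`f_π^w (ν)`.
-/

attribute [ext] QPath

namespace QPath

variable {n : ℕ} {A : Type*}

theorem vtx_eq_getElem (π : QPath n A) {r : ℕ} (hr : r ≤ π.steps.length) :
    π.vtx r = (π.start :: π.steps.map Prod.snd)[r]'(by simpa using Nat.lt_succ_of_le hr) :=
  List.getD_eq_getElem _ _ _

theorem vtx_zero (π : QPath n A) : π.vtx 0 = π.start := rfl

theorem vtx_succ (π : QPath n A) {r : ℕ} (hr : r < π.steps.length) :
    π.vtx (r + 1) = π.steps[r].2 := by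
  simp [π.vtx_eq_getElem hr]

theorem strictMonoOn_vtx (π : QPath n A) : StrictMonoOn π.vtx (Set.Iic π.steps.length) := by
  intro r hr r' hr' h
  rw [π.vtx_eq_getElem hr, π.vtx_eq_getElem hr']
  exact List.pairwise_iff_getElem.mp (List.isChain_iff_pairwise.mp π.chain) _ _ _ _ h

theorem vtx_lt_vtx_succ (π : QPath n A) {r : ℕ} (hr : r < π.steps.length) :
    π.vtx r < π.vtx (r + 1) :=
  π.strictMonoOn_vtx (Set.mem_Iic.mpr hr.le) (Set.mem_Iic.mpr hr) r.lt_succ_self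

def edges (π : QPath n A) : Set (A × Fin n × Fin n) :=
  Set.range fun s : Fin π.steps.length => (π.steps[s].1, π.vtx s, π.vtx (s + 1))

theorem vtx_eq_of_edges_subset {π π' : QPath n A} (hs : π'.start = π.start)
    (h : π'.edges ⊆ π.edges) {r : ℕ} (hr : r ≤ π'.steps.length) :
    r ≤ π.steps.length ∧ π'.vtx r = π.vtx r := by
  induction r with
  | zero => exact ⟨Nat.zero_le _, hs⟩
  | succ r ih =>
    obtain ⟨hrπ, hv⟩ := ih (by omega)
    obtain ⟨s, hse⟩ := h ⟨⟨r, hr⟩, rfl⟩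
    simp only [Prod.mk.injEq] at hse
    have hsr : (s : ℕ) = r :=
      π.strictMonoOn_vtx.injOn (Set.mem_Iic.mpr s.isLt.le) (Set.mem_Iic.mpr hrπ) (hse.2.1.trans hv)
    have := s.isLt
    refine ⟨by omega, ?_⟩
    rw [← hse.2.2, hsr]

theorem eq_of_edges_subset {π π' : QPath n A} (hs : π'.start = π.start) (hl : π'.last = π.last)
    (h : π'.edges ⊆ π.edges) : π' = π := by
  have hvtx := fun r (hr : r ≤ π'.steps.length) => vtx_eq_of_edges_subset hs h hr
  have hlen : π'.steps.length = π.steps.length := by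
    obtain ⟨hle, hv⟩ := hvtx _ le_rfl
    exact π.strictMonoOn_vtx.injOn (Set.mem_Iic.mpr hle) (Set.mem_Iic.mpr le_rfl)
      (hv.symm.trans hl)
  refine QPath.ext hs (List.ext_getElem hlen fun r hr hr' => Prod.ext ?_ ?_)
  · obtain ⟨s, hse⟩ := h ⟨⟨r, hr⟩, rfl⟩
    simp only [Prod.mk.injEq] at hse
    have hsr : (s : ℕ) = r := π.strictMonoOn_vtx.injOn (Set.mem_Iic.mpr s.isLt.le)
      (Set.mem_Iic.mpr hr'.le) (hse.2.1.trans (hvtx r hr.le).2)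
    obtain ⟨s, hs⟩ := s
    subst hsr
    exact hse.1.symm
  · rw [← π'.vtx_succ hr, ← π.vtx_succ hr']
    exact (hvtx (r + 1) hr).2

end QPath

open Finset

section Weights

variable {S : Type*} [CommSemiring S] {n : ℕ} {A : Type*}

def seqWeight (M : A → Matrix (Fin n) (Fin n) S) (w : List A) (v : Fin (w.length + 1) → Fin n) :
    S :=
  ∏ t : Fin w.length, M (w.get t) (v t.castSucc) (v t.succ)

theorem seqWeight_cons (M : A → Matrix (Fin n) (Fin n) S) (a : A) (w : List A) (x : Fin n)
    (v : Fin (w.length + 1) → Fin n) :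
    seqWeight M (a :: w) (Fin.cons x v) = M a x (v 0) * seqWeight M w v := by
  simp [seqWeight, Fin.prod_univ_succ]

theorem list_prod_map_apply (M : A → Matrix (Fin n) (Fin n) S) (w : List A) (i j : Fin n) :
    (w.map M).prod i j =
      ∑ v : Fin (w.length + 1) → Fin n,
        if v 0 = i ∧ v (Fin.last _) = j then seqWeight M w v else 0 := by
  induction w generalizing i with
  | nil =>
    simp only [List.map_nil, List.prod_nil, List.length_nil]
    rw [← (Equiv.funUnique (Fin 1) (Fin n)).symm.sum_comp]
    simp [seqWeight, Matrix.one_apply, ite_and]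
  | cons a w ih =>
    have hcons (x : Fin n) (v : Fin (w.length + 1) → Fin n) :
        Fin.consEquiv (fun _ => Fin n) (x, v) = Fin.cons x v := rfl
    simp only [List.length_cons]
    rw [← (Fin.consEquiv fun _ => Fin n).sum_comp, Fintype.sum_prod_type]
    simp only [List.map_cons, List.prod_cons, Matrix.mul_apply, ih, mul_sum, hcons, seqWeight_cons]
    rw [sum_comm]
    simp [← Fin.succ_last, ite_and]

theorem seqWeight_eq_zero_of_not_monotone {M : A → Matrix (Fin n) (Fin n) S}
    (hM : ∀ a, M a ∈ UT n S) {w : List A} {v : Fin (w.length + 1) → Fin n}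
    (hv : ¬ Monotone v) : seqWeight M w v = 0 := by
  rw [Fin.monotone_iff_le_succ] at hv
  push Not at hv
  obtain ⟨t, ht⟩ := hv
  exact prod_eq_zero (mem_univ t) (hM _ _ _ ht)

end Weights

section Occurrences

variable {n : ℕ} {A : Type*}

/-- For an occurrence `p` and a position `i`, `countBelow p i` is the index `j(i)` of the paper. -/
def countBelow {k m : ℕ} (p : Fin k → Fin m) (r : ℕ) : ℕ := #{j | (p j : ℕ) < r}

section countBelow

variable {k m : ℕ} (p : Fin k → Fin m)

theorem countBelow_le (r : ℕ) : countBelow p r ≤ k :=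
  (card_filter_le _ _).trans_eq (card_fin k)

theorem countBelow_mono : Monotone (countBelow p) := fun _ _ h =>
  card_le_card (monotone_filter_right _ fun _ _ hj => lt_of_lt_of_le hj h)

@[simp] theorem countBelow_zero : countBelow p 0 = 0 := by simp [countBelow]

@[simp] theorem countBelow_self : countBelow p m = k := by simp [countBelow]

variable {p}

theorem countBelow_apply (hp : StrictMono p) (j : Fin k) : countBelow p (p j) = j := by
  simp_rw [countBelow, ← Fin.lt_def, hp.lt_iff_lt, filter_gt_eq_Iio, Fin.card_Iio]

theorem countBelow_apply_succ (hp : StrictMono p) (j : Fin k) :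
    countBelow p (p j + 1) = j + 1 := by
  simp_rw [countBelow, Nat.lt_succ_iff, ← Fin.le_def, hp.le_iff_le, filter_ge_eq_Iic, Fin.card_Iic]

theorem countBelow_succ_of_notMem_range {t : Fin m} (ht : t ∉ Set.range p) :
    countBelow p (t + 1) = countBelow p t := by
  refine congrArg card (filter_congr fun j _ => ?_)
  have : (p j : ℕ) ≠ t := fun h => ht ⟨j, Fin.ext h⟩
  omega

end countBelow

/-- The walk through the vertices of `π` that moves along the next edge exactly at the positions
of `p`. -/
def occSeq (π : QPath n A) {m : ℕ} (p : Fin π.steps.length → Fin m) : Fin (m + 1) → Fin n :=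
  fun t => π.vtx (countBelow p t)

variable (π : QPath n A) {m : ℕ} (p : Fin π.steps.length → Fin m)

theorem occSeq_monotone : Monotone (occSeq π p) := fun _ _ h =>
  π.strictMonoOn_vtx.monotoneOn (countBelow_le p _) (countBelow_le p _) (countBelow_mono p h)

@[simp] theorem occSeq_zero : occSeq π p 0 = π.start := by simp [occSeq, QPath.vtx_zero]

@[simp] theorem occSeq_last : occSeq π p (Fin.last m) = π.last := by simp [occSeq, QPath.last]

variable {π p}

theorem occSeq_castSucc_apply (hp : StrictMono p) (j : Fin π.steps.length) :
    occSeq π p (p j).castSucc = π.vtx j := by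
  simp [occSeq, countBelow_apply hp]

theorem occSeq_succ_apply (hp : StrictMono p) (j : Fin π.steps.length) :
    occSeq π p (p j).succ = π.vtx (j + 1) := by
  simp [occSeq, countBelow_apply_succ hp]

theorem occSeq_succ_of_notMem_range {t : Fin m} (ht : t ∉ Set.range p) :
    occSeq π p t.succ = occSeq π p t.castSucc := by
  simp [occSeq, countBelow_succ_of_notMem_range ht]

theorem occSeq_castSucc_lt_succ_iff (hp : StrictMono p) {t : Fin m} :
    occSeq π p t.castSucc < occSeq π p t.succ ↔ t ∈ Set.range p := by
  constructor
  · intro h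
    by_contra ht
    exact h.ne (occSeq_succ_of_notMem_range ht).symm
  · rintro ⟨j, rfl⟩
    rw [occSeq_castSucc_apply hp, occSeq_succ_apply hp]
    exact π.vtx_lt_vtx_succ j.isLt

end Occurrences

theorem IsOcc.strictMono {n : ℕ} {A : Type*} {π : QPath n A} {w : List A}
    {p : Fin π.steps.length → Fin w.length} (hocc : IsOcc π w p) : StrictMono p :=
  fun _ _ h => hocc.1 _ _ h

section PathWeight

variable {S : Type*} [CommSemiring S] {n : ℕ} {A : Type*}

def pathWeight (M : A → Matrix (Fin n) (Fin n) S) (π : QPath n A) : S :=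
  ∏ j : Fin π.steps.length, M π.steps[j].1 (π.vtx j) (π.vtx (j + 1))

def diagEntries (M : A → Matrix (Fin n) (Fin n) S) (x : A × Fin n) : S := M x.1 x.2 x.2

theorem seqWeight_occSeq (M : A → Matrix (Fin n) (Fin n) S) {π : QPath n A} {w : List A}
    {p : Fin π.steps.length → Fin w.length} (hocc : IsOcc π w p) :
    seqWeight M w (occSeq π p) =
      pathWeight M π * MvPolynomial.eval (diagEntries M) (occMonomial S π w p) := by
  have hp := hocc.strictMono
  rw [seqWeight, ← prod_filter_mul_prod_filter_not univ (· ∈ Set.range p)]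
  congr 1
  · have hrange : ({t | t ∈ Set.range p} : Finset (Fin w.length)) = univ.image p := by ext; simp
    rw [hrange, prod_image hp.injective.injOn, pathWeight]
    refine prod_congr rfl fun j _ => ?_
    rw [occSeq_castSucc_apply hp, occSeq_succ_apply hp, hocc.2 j]
    rfl
  · rw [occMonomial, map_prod, prod_filter]
    refine prod_congr rfl fun t _ => ?_
    by_cases ht : t ∈ Set.range p
    · simp [ht, Set.mem_range.mp ht]
    · have hcount : #{j | p j < t} = countBelow p t := rfl
      rw [occSeq_succ_of_notMem_range ht]
      simp only [Set.mem_range] at ht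
      simp [ht, diagEntries, occSeq, hcount]

end PathWeight

section SeqPath

variable {n : ℕ} {A : Type*}

def ascents {m : ℕ} (v : Fin (m + 1) → Fin n) : List (Fin m) :=
  (List.finRange m).filter fun t => v t.castSucc < v t.succ

theorem pairwise_ascents {m : ℕ} (v : Fin (m + 1) → Fin n) : (ascents v).Pairwise (· < ·) :=
  (List.pairwise_lt_finRange m).sublist List.filter_sublist

theorem mem_ascents {m : ℕ} {v : Fin (m + 1) → Fin n} {t : Fin m} :
    t ∈ ascents v ↔ v t.castSucc < v t.succ := by
  simp [ascents]

/-- A non-monotone walk is sent to the empty path at `v 0`. -/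
def seqPath (w : List A) (v : Fin (w.length + 1) → Fin n) : QPath n A :=
  if hv : Monotone v then
    { start := v 0
      steps := (ascents v).map fun t => (w.get t, v t.succ)
      chain := by
        have hle : ∀ {s t : Fin w.length}, s < t → v s.succ ≤ v t.castSucc := fun h =>
          hv (Fin.succ_le_castSucc_iff.mpr h)
        simp only [List.map_map]
        refine List.isChain_iff_pairwise.mpr (List.pairwise_cons.mpr ⟨?_, ?_⟩)
        · simp only [List.mem_map, Function.comp_apply, forall_exists_index, and_imp]
          rintro _ t ht rfl
          exact (hv (Fin.zero_le _)).trans_lt (mem_ascents.mp ht)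
        · refine List.pairwise_map.mpr ((pairwise_ascents v).imp_of_mem fun _ ht hst => ?_)
          exact (hle hst).trans_lt (mem_ascents.mp ht) }
  else ⟨v 0, [], List.isChain_singleton _⟩

variable {w : List A} {v : Fin (w.length + 1) → Fin n}

@[simp] theorem seqPath_start : (seqPath w v).start = v 0 := by
  unfold seqPath
  split <;> rfl

theorem seqPath_steps (hv : Monotone v) :
    (seqPath w v).steps = (ascents v).map fun t => (w.get t, v t.succ) := by
  rw [seqPath, dif_pos hv]

theorem length_seqPath_steps_le : (seqPath w v).steps.length ≤ (ascents v).length := by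
  unfold seqPath
  split <;> simp

def seqOcc (w : List A) (v : Fin (w.length + 1) → Fin n) :
    Fin (seqPath w v).steps.length → Fin w.length :=
  fun j => (ascents v)[j]'(j.isLt.trans_le length_seqPath_steps_le)

theorem seqOcc_strictMono : StrictMono (seqOcc w v) := fun _ _ h =>
  List.pairwise_iff_getElem.mp (pairwise_ascents v) _ _ _ _ h

theorem mem_range_seqOcc (hv : Monotone v) {t : Fin w.length} :
    t ∈ Set.range (seqOcc w v) ↔ v t.castSucc < v t.succ := by
  have hlen : (seqPath w v).steps.length = (ascents v).length := by simp [seqPath_steps hv]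
  rw [← mem_ascents, List.mem_iff_getElem]
  constructor
  · rintro ⟨j, rfl⟩
    exact ⟨j, hlen ▸ j.isLt, rfl⟩
  · rintro ⟨j, hj, rfl⟩
    exact ⟨⟨j, hlen ▸ hj⟩, rfl⟩

theorem seqPath_steps_getElem (hv : Monotone v) (j : Fin (seqPath w v).steps.length) :
    (seqPath w v).steps[(j : ℕ)] = (w.get (seqOcc w v j), v (seqOcc w v j).succ) := by
  simp [seqPath_steps hv, seqOcc]

theorem isOcc_seqOcc (hv : Monotone v) : IsOcc (seqPath w v) w (seqOcc w v) :=
  ⟨fun _ _ h => seqOcc_strictMono h, fun j => by simp [seqPath_steps_getElem hv]⟩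

theorem occSeq_seqOcc (hv : Monotone v) : occSeq (seqPath w v) (seqOcc w v) = v := by
  funext t
  induction t using Fin.induction with
  | zero => simp
  | succ t ih =>
    by_cases ht : t ∈ Set.range (seqOcc w v)
    · obtain ⟨j, rfl⟩ := ht
      rw [occSeq_succ_apply seqOcc_strictMono, QPath.vtx_succ _ j.isLt,
        seqPath_steps_getElem hv]
    · rw [occSeq_succ_of_notMem_range ht, ih]
      exact le_antisymm (hv (Fin.castSucc_le_succ t)) (not_lt.mp ((mem_range_seqOcc hv).not.mp ht))

theorem seqPath_last (hv : Monotone v) : (seqPath w v).last = v (Fin.last _) := by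
  rw [← occSeq_last _ (seqOcc w v), occSeq_seqOcc hv]

end SeqPath

section SeqPathOccSeq

variable {n : ℕ} {A : Type*} {π : QPath n A} {w : List A} {p : Fin π.steps.length → Fin w.length}

theorem ascents_occSeq (hocc : IsOcc π w p) : ascents (occSeq π p) = List.ofFn p := by
  have hp := hocc.strictMono
  refine (pairwise_ascents _).eq_of_mem_iff (List.pairwise_ofFn.mpr fun _ _ h => hp h) fun t => ?_
  rw [mem_ascents, occSeq_castSucc_lt_succ_iff hp, List.mem_ofFn, Set.mem_range]

theorem length_seqPath_occSeq_steps (hocc : IsOcc π w p) :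
    (seqPath w (occSeq π p)).steps.length = π.steps.length := by
  simp [seqPath_steps (occSeq_monotone π p), ascents_occSeq hocc]

theorem seqOcc_occSeq (hocc : IsOcc π w p) (j : Fin (seqPath w (occSeq π p)).steps.length) :
    seqOcc w (occSeq π p) j = p (j.cast (length_seqPath_occSeq_steps hocc)) := by
  simp [seqOcc, ascents_occSeq hocc, Fin.cast]

theorem seqPath_occSeq (hocc : IsOcc π w p) : seqPath w (occSeq π p) = π := by
  have hp := hocc.strictMono
  refine QPath.ext (by simp) (List.ext_getElem (length_seqPath_occSeq_steps hocc) fun j h h' => ?_)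
  rw [seqPath_steps_getElem (occSeq_monotone π p) ⟨j, h⟩, seqOcc_occSeq hocc,
    occSeq_succ_apply hp, hocc.2]
  simp [π.vtx_succ h']

end SeqPathOccSeq

section Entries

variable {S : Type*} [CommSemiring S] {n : ℕ} {A : Type*}

def monotoneSeqs (m : ℕ) (i j : Fin n) : Finset (Fin (m + 1) → Fin n) :=
  {v | Monotone v ∧ v 0 = i ∧ v (Fin.last m) = j}

theorem occSeq_mem_monotoneSeqs (π : QPath n A) {m : ℕ} (p : Fin π.steps.length → Fin m) :
    occSeq π p ∈ monotoneSeqs m π.start π.last := by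
  simp [monotoneSeqs, occSeq_monotone]

theorem start_last_of_mem_image_seqPath {w : List A} {i j : Fin n} {π : QPath n A}
    (hπ : π ∈ (monotoneSeqs w.length i j).image (seqPath w)) : π.start = i ∧ π.last = j := by
  obtain ⟨v, hv, rfl⟩ := mem_image.mp hπ
  simp only [monotoneSeqs, mem_filter, mem_univ, true_and] at hv
  exact ⟨by simp [hv.2.1], by simp [seqPath_last hv.1, hv.2.2]⟩

/-- Monotone walks correspond bijectively to paths together with an occurrence in `w`. -/
theorem sum_seqWeight_monotoneSeqs (M : A → Matrix (Fin n) (Fin n) S) (w : List A) (i j : Fin n) :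
    ∑ v ∈ monotoneSeqs w.length i j, seqWeight M w v =
      ∑ π ∈ (monotoneSeqs w.length i j).image (seqPath w),
        pathWeight M π * MvPolynomial.eval (diagEntries M) (fPoly S π w) := by
  simp only [fPoly, map_sum, mul_sum]
  rw [sum_sigma']
  refine sum_nbij' (fun v => ⟨seqPath w v, seqOcc w v⟩) (fun x => occSeq x.1 x.2)
    (fun v hv => ?_) (fun x hx => ?_) (fun v hv => ?_) (fun x hx => ?_) (fun v hv => ?_)
  · have hmono := (mem_filter.mp hv).2.1
    exact mem_sigma.mpr ⟨mem_image_of_mem _ hv, by simpa using isOcc_seqOcc hmono⟩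
  · obtain ⟨hπ, hocc⟩ := mem_sigma.mp hx
    obtain ⟨hs, hl⟩ := start_last_of_mem_image_seqPath hπ
    simpa [hs, hl] using occSeq_mem_monotoneSeqs x.1 x.2
  · exact occSeq_seqOcc (mem_filter.mp hv).2.1
  · have hocc : IsOcc x.1 w x.2 := (mem_filter.mp (mem_sigma.mp hx).2).2
    refine Sigma.ext (seqPath_occSeq hocc) ((Fin.heq_fun_iff ?_).mpr fun j => ?_)
    · exact length_seqPath_occSeq_steps hocc
    · exact seqOcc_occSeq hocc j
  · have hmono := (mem_filter.mp hv).2.1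
    dsimp only
    rw [← seqWeight_occSeq M (isOcc_seqOcc hmono), occSeq_seqOcc hmono]

theorem list_prod_map_apply_eq_finsum (M : A → Matrix (Fin n) (Fin n) S)
    (hM : ∀ a, M a ∈ UT n S) (w : List A) (i j : Fin n) :
    (w.map M).prod i j = ∑ᶠ π ∈ {π : QPath n A | π.start = i ∧ π.last = j},
      pathWeight M π * MvPolynomial.eval (diagEntries M) (fPoly S π w) := by
  have hwalks : (w.map M).prod i j = ∑ v ∈ monotoneSeqs w.length i j, seqWeight M w v := by
    rw [list_prod_map_apply, monotoneSeqs, sum_filter]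
    refine sum_congr rfl fun v _ => ?_
    by_cases hv : Monotone v
    · simp [hv]
    · simp [hv, seqWeight_eq_zero_of_not_monotone hM hv]
  rw [hwalks, sum_seqWeight_monotoneSeqs]
  refine (finsum_mem_eq_sum_of_subset _ ?_ fun π hπ => start_last_of_mem_image_seqPath hπ).symm
  rintro π ⟨hπ, hne⟩
  have hocc : ∃ p, IsOcc π w p := by
    by_contra! h
    exact hne (by simp [fPoly, h])
  obtain ⟨p, hocc⟩ := hocc
  rw [← seqPath_occSeq hocc, ← hπ.1, ← hπ.2]
  exact mem_image_of_mem _ (occSeq_mem_monotoneSeqs π p)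

end Entries

section PathMatrix

variable {S : Type*} [CommSemiring S] {n : ℕ} {A : Type*}

noncomputable def pathMatrix (π : QPath n A) (ν : A × Fin n → S) (a : A) :
    Matrix (Fin n) (Fin n) S :=
  Matrix.of fun b c => if b = c then ν (a, b) else if (a, b, c) ∈ π.edges then 1 else 0

variable (π : QPath n A) (ν : A × Fin n → S)

theorem lt_of_mem_edges {a : A} {b c : Fin n} (h : (a, b, c) ∈ π.edges) : b < c := by
  obtain ⟨s, hs⟩ := h
  simp only [Prod.mk.injEq] at hs
  exact hs.2.1 ▸ hs.2.2 ▸ π.vtx_lt_vtx_succ s.isLt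

theorem pathMatrix_mem_UT (a : A) : pathMatrix π ν a ∈ UT n S := fun b c hcb => by
  simp only [pathMatrix, Matrix.of_apply, if_neg hcb.ne', ite_eq_right_iff]
  exact fun h => absurd (lt_of_mem_edges π h) hcb.not_gt

theorem diagEntries_pathMatrix : diagEntries (pathMatrix π ν) = ν := by
  ext x
  simp [diagEntries, pathMatrix]

theorem pathWeight_pathMatrix_self : pathWeight (pathMatrix π ν) π = 1 :=
  prod_eq_one fun s _ => by
    simp [pathMatrix, (π.vtx_lt_vtx_succ s.isLt).ne]
    exact fun h => absurd ⟨s, rfl⟩ h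

theorem pathWeight_pathMatrix_eq_zero {π' : QPath n A} (hs : π'.start = π.start)
    (hl : π'.last = π.last) (hne : π' ≠ π) : pathWeight (pathMatrix π ν) π' = 0 := by
  by_contra h
  refine hne (QPath.eq_of_edges_subset hs hl ?_)
  rintro _ ⟨s, rfl⟩
  by_contra hs
  simp only [Fin.getElem_fin] at hs
  exact h (prod_eq_zero (mem_univ s) (by simp [pathMatrix, (π'.vtx_lt_vtx_succ s.isLt).ne, hs]))

theorem eval_fPoly_eq_list_prod_apply (w : List A) :
    MvPolynomial.eval ν (fPoly S π w) = (w.map (pathMatrix π ν)).prod π.start π.last := by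
  rw [list_prod_map_apply_eq_finsum _ (pathMatrix_mem_UT π ν),
    finsum_mem_eq_sum_of_subset (t := {π}) _ ?_ (by simp), sum_singleton,
    pathWeight_pathMatrix_self, one_mul, diagEntries_pathMatrix]
  rintro π' ⟨⟨hs, hl⟩, hne⟩
  by_contra h
  exact hne (by simp [pathWeight_pathMatrix_eq_zero π ν hs hl (by simpa using h)])

end PathMatrix

theorem Submonoid.coe_freeMonoid_hom_apply {A M : Type*} [Monoid M] {N : Submonoid M}
    (φ : FreeMonoid A →* N) (x : FreeMonoid A) :
    (φ x : M) = ((FreeMonoid.toList x).map fun a => (φ (FreeMonoid.of a) : M)).prod := by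
  conv_lhs => rw [← FreeMonoid.lift.apply_symm_apply φ]
  simp [FreeMonoid.lift_apply, List.map_map, Function.comp_def]

theorem freeobj_identity_iff_polynomials_general {S : Type*} [CommSemiring S]
    {n : ℕ} {A : Type*} (u w : FreeMonoid A) :
    (∀ φ : FreeMonoid A →* (UT n S), φ u = φ w) ↔
      (∀ π : QPath n A, ∀ ν : A × Fin n → S,
        MvPolynomial.eval ν (fPoly S π (FreeMonoid.toList u)) =
          MvPolynomial.eval ν (fPoly S π (FreeMonoid.toList w))) := by
  constructor
  · intro hid π ν
    let φ : FreeMonoid A →* UT n S :=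
      FreeMonoid.lift fun a => ⟨pathMatrix π ν a, pathMatrix_mem_UT π ν a⟩
    have hentry := congrArg (fun X : UT n S => (X : Matrix (Fin n) (Fin n) S) π.start π.last)
      (hid φ)
    simpa [Submonoid.coe_freeMonoid_hom_apply, φ, eval_fPoly_eq_list_prod_apply] using hentry
  · intro hpoly φ
    have hM (a : A) : (φ (FreeMonoid.of a) : Matrix (Fin n) (Fin n) S) ∈ UT n S := (φ _).2
    ext i j
    rw [Submonoid.coe_freeMonoid_hom_apply φ u, Submonoid.coe_freeMonoid_hom_apply φ w,
      list_prod_map_apply_eq_finsum _ hM, list_prod_map_apply_eq_finsum _ hM]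
    simp only [hpoly]

/-- For a commutative semiring `S` (with `0 ≠ 1`), `n ≥ 1` and an alphabet
`A`, the monoid identity `u = w` holds in `UT_n(S)` if and only if for every path `π` in
`Γ_{n,A}` the formal polynomials `f_π^u` and `f_π^w` are equal as polynomial functions
over `S`. -/
theorem freeobj_identity_iff_polynomials {S : Type*} [CommSemiring S] [Nontrivial S]
    {n : ℕ} (hn : 1 ≤ n) {A : Type*} (u w : FreeMonoid A) :
    (∀ φ : FreeMonoid A →* (UT n S), φ u = φ w) ↔
      (∀ π : QPath n A, ∀ ν : A × Fin n → S,
        MvPolynomial.eval ν (fPoly S π (FreeMonoid.toList u)) =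
          MvPolynomial.eval ν (fPoly S π (FreeMonoid.toList w))) :=
  freeobj_identity_iff_polynomials_general u w
end

section
/- Let S be a commutative semiring with 0 and 1 and let n ≥ 1. The evaluation map sending a formal polynomial in one variable over S to the function S → S it defines is injective if and only if the evaluation map sending a formal polynomial in n variables over S to the function S^n → S it defines is injective. -/
open MvPolynomial

lemma aux_mv {S : Type*} [CommSemiring S]
    (h1 : Function.Injective (fun f : Polynomial S => fun x : S => Polynomial.eval x f)) :
    ∀ n, Function.Injective
      (fun f : MvPolynomial (Fin n) S => fun x : Fin n → S => MvPolynomial.eval x f) := by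
  intro n
  induction n with
  | zero =>
    intro f g h
    have := congrFun h (fun i => i.elim0)
    have hf := MvPolynomial.eq_C_of_isEmpty f
    have hg := MvPolynomial.eq_C_of_isEmpty g
    rw [hf, hg] at this ⊢
    simp only [eval_C] at this
    rw [this]
  | succ n ih =>
    intro f g h
    have key : ∀ i : ℕ, (finSuccEquiv S n f).coeff i = (finSuccEquiv S n g).coeff i := by
      intro i
      apply ih
      funext s
      have h2 : (fun x : S => Polynomial.eval x (Polynomial.map (eval s) (finSuccEquiv S n f)))
          = fun x : S => Polynomial.eval x (Polynomial.map (eval s) (finSuccEquiv S n g)) := by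
        funext y
        rw [← eval_eq_eval_mv_eval', ← eval_eq_eval_mv_eval']
        exact congrFun h _
      have := congrArg (fun p => p.coeff i) (h1 h2)
      simpa [Polynomial.coeff_map] using this
    exact (finSuccEquiv S n).injective (Polynomial.ext key)

/-- Over a commutative semiring `S`, distinct formal polynomials in one
variable define distinct functions `S → S` if and only if, for any `n ≥ 1`, distinct formal
polynomials in `n` variables define distinct functions `Sⁿ → S`. -/
theorem one_variable_iff_n_variables {S : Type*} [CommSemiring S] [Nontrivial S]
    (n : ℕ) (hn : 1 ≤ n) :
    Function.Injective (fun f : Polynomial S => fun x : S => Polynomial.eval x f) ↔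
      Function.Injective
        (fun f : MvPolynomial (Fin n) S => fun x : Fin n → S => MvPolynomial.eval x f) := by
  constructor
  · intro h1
    exact aux_mv h1 n
  · intro hn' f g h
    set i : Fin n := ⟨0, hn⟩ with hi
    let φ : Polynomial S →ₐ[S] MvPolynomial (Fin n) S :=
      Polynomial.aeval (MvPolynomial.X i)
    let ψ : MvPolynomial (Fin n) S →ₐ[S] Polynomial S :=
      MvPolynomial.aeval (fun _ => Polynomial.X)
    have hφinj : Function.Injective φ := by
      have hcomp : ψ.comp φ = AlgHom.id S (Polynomial S) := by
        ext
        simp [φ, ψ]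
      intro a b hab
      have ha := congrFun (congrArg DFunLike.coe hcomp) a
      have hb := congrFun (congrArg DFunLike.coe hcomp) b
      simp only [AlgHom.coe_comp, Function.comp_apply, AlgHom.coe_id, id_eq] at ha hb
      rw [← ha, ← hb, hab]
    apply hφinj
    apply hn'
    funext x
    have hkey : (MvPolynomial.eval x).comp (φ : Polynomial S →+* MvPolynomial (Fin n) S)
        = Polynomial.evalRingHom (x i) := by
      apply Polynomial.ringHom_ext
      · intro s; simp [φ]
      · simp [φ]
    have hf := congrFun (congrArg DFunLike.coe hkey) f
    have hg := congrFun (congrArg DFunLike.coe hkey) g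
    simp only [RingHom.coe_comp, Function.comp_apply, Polynomial.coe_evalRingHom] at hf hg
    exact hf.trans ((congrFun h (x i)).trans hg.symm)
end

section
/- Let S be a commutative semiring with 0 and 1 such that distinct formal polynomials in one variable over S define distinct functions S → S. Then UT_2(S) satisfies no nontrivial semigroup identity: for every alphabet Σ and all distinct words u, v ∈ Σ⁺, there is a semigroup homomorphism φ : Σ⁺ → UT_2(S) with φ(u) ≠ φ(v). Consequently, for every n ≥ 2, neither UT_n(S) nor the multiplicative semigroup M_n(S) of all n×n matrices over S satisfies a nontrivial semigroup identity. -/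
/-!
Send a letter `a` to `!![y, x ^ c a; 0, 1]`, where `c` is injective on the letters in play. A word
`a₀ ⋯ a_{k-1}` then goes to `!![y ^ k, p(x, y); 0, 1]` with `p = ∑ᵢ X ^ c aᵢ * Y ^ i`, and `p`
determines the word. Separation of polynomials by their values, applied once in each variable,
yields a point `(x, y)` at which the polynomials of two distinct words differ. For `n ≥ 2`,
`UT₂(S)` embeds in `UTₙ(S) ⊆ Mₙ(S)` as the upper left corner.
-/

open Polynomial
open scoped Polynomial.Bivariate

theorem MulHom.exists_comp_ne_of_injective {M N P : Type*} [Mul M] [Mul N] [Mul P]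
    (f : N →ₙ* P) (hf : Function.Injective f) {u v : M} (h : ∃ φ : M →ₙ* N, φ u ≠ φ v) :
    ∃ φ : M →ₙ* P, φ u ≠ φ v :=
  let ⟨φ, hφ⟩ := h
  ⟨f.comp φ, hf.ne hφ⟩

section WordPolynomial

variable {S : Type*} [CommSemiring S]

theorem Polynomial.exists_evalEval_ne
    (h : Function.Injective fun f : S[X] => fun x : S => f.eval x)
    {p q : S[X][Y]} (hpq : p ≠ q) : ∃ x y : S, p.evalEval x y ≠ q.evalEval x y := by
  obtain ⟨k, hk⟩ : ∃ k, p.coeff k ≠ q.coeff k := not_forall.mp (mt Polynomial.ext hpq)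
  obtain ⟨x, hx⟩ := Function.ne_iff.mp (h.ne hk)
  have hmap : p.map (evalRingHom x) ≠ q.map (evalRingHom x) := fun e =>
    hx (by simpa using congrArg (coeff · k) e)
  obtain ⟨y, hy⟩ := Function.ne_iff.mp (h.ne hmap)
  exact ⟨x, y, by simpa only [map_evalRingHom_eval] using hy⟩

variable {A : Type*}

/-- `∑ᵢ X ^ code lᵢ * Y ^ i`, the top right entry of the product of the matrices
`!![Y, X ^ code a; 0, 1]` along `l`. -/
noncomputable def wordPolynomial (code : A → ℕ) : List A → S[X][Y]
  | [] => 0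
  | a :: l => C (X ^ code a) + Y * wordPolynomial code l

theorem coeff_wordPolynomial_cons_zero (code : A → ℕ) (a : A) (l : List A) :
    (wordPolynomial (S := S) code (a :: l)).coeff 0 = X ^ code a := by
  simp only [wordPolynomial, coeff_add, coeff_C_zero, mul_coeff_zero, coeff_X_zero, zero_mul,
    add_zero]

theorem coeff_wordPolynomial_cons_succ (code : A → ℕ) (a : A) (l : List A) (k : ℕ) :
    (wordPolynomial (S := S) code (a :: l)).coeff (k + 1) = (wordPolynomial code l).coeff k := by
  simp only [wordPolynomial, coeff_add, coeff_C_succ, coeff_X_mul, zero_add]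

theorem wordPolynomial_cons_ne_zero [Nontrivial S] (code : A → ℕ) (a : A) (l : List A) :
    wordPolynomial (S := S) code (a :: l) ≠ 0 := fun h =>
  (monic_X_pow (R := S) (code a)).ne_zero <| by
    rw [← coeff_wordPolynomial_cons_zero, h, coeff_zero]

theorem wordPolynomial_injective [Nontrivial S] {code : A → ℕ} {l₁ l₂ : List A}
    (hcode : ∀ a ∈ l₁, ∀ b ∈ l₂, code a = code b → a = b)
    (h : wordPolynomial (S := S) code l₁ = wordPolynomial code l₂) : l₁ = l₂ := by
  induction l₁ generalizing l₂ with
  | nil =>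
    cases l₂ with
    | nil => rfl
    | cons b l₂ => exact (wordPolynomial_cons_ne_zero code b l₂ h.symm).elim
  | cons a l₁ ih =>
    cases l₂ with
    | nil => exact (wordPolynomial_cons_ne_zero code a l₁ h).elim
    | cons b l₂ =>
      have hab : a = b := by
        refine hcode a (by simp) b (by simp) ?_
        simpa [coeff_wordPolynomial_cons_zero] using congrArg (natDegree <| coeff · 0) h
      have htail : wordPolynomial (S := S) code l₁ = wordPolynomial code l₂ := by
        ext k : 1
        simpa only [coeff_wordPolynomial_cons_succ] using congrArg (coeff · (k + 1)) h
      rw [hab, ih (fun a ha b hb => hcode a (by simp [ha]) b (by simp [hb])) htail]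

theorem exists_wordPolynomial_ne [Nontrivial S] {l₁ l₂ : List A} (hl : l₁ ≠ l₂) :
    ∃ code : A → ℕ, wordPolynomial (S := S) code l₁ ≠ wordPolynomial code l₂ := by
  classical
  refine ⟨fun a => (l₁ ++ l₂).idxOf a, fun h => hl (wordPolynomial_injective ?_ h)⟩
  exact fun a ha b _ => (List.idxOf_inj (List.mem_append_left _ ha)).mp

end WordPolynomial

section Words

variable {S : Type*} [CommSemiring S] {A : Type*}

noncomputable def wordMatrixHom (code : A → ℕ) (x y : S) :
    FreeMonoid A →* Matrix (Fin 2) (Fin 2) S :=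
  FreeMonoid.lift fun a => !![y, x ^ code a; 0, 1]

theorem wordMatrixHom_ofList (code : A → ℕ) (x y : S) (l : List A) :
    wordMatrixHom code x y (FreeMonoid.ofList l) =
      !![y ^ l.length, (wordPolynomial code l).evalEval x y; 0, 1] := by
  induction l with
  | nil => simp [wordMatrixHom, wordPolynomial, Matrix.one_fin_two]
  | cons a l ih =>
    rw [FreeMonoid.ofList_cons, map_mul, ih, wordMatrixHom, FreeMonoid.lift_eval_of,
      Matrix.mul_fin_two]
    simp [wordPolynomial, evalEval_C, pow_succ, mul_comm, add_comm]

end Words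

namespace UT

variable {S : Type*} [CommSemiring S]

theorem mem_two_iff {M : Matrix (Fin 2) (Fin 2) S} : M ∈ UT 2 S ↔ M 1 0 = 0 := by
  refine ⟨fun h => h 1 0 (by decide), fun h i j hij => ?_⟩
  fin_cases i <;> fin_cases j <;> first | exact h | exact absurd hij (by decide)

def blockEmbedding (k m : ℕ) : UT k S →ₙ* UT (k + m) S where
  toFun M := ⟨Matrix.reindex finSumFinEquiv finSumFinEquiv (Matrix.fromBlocks M.1 0 0 0), by
    intro i j hij
    obtain ⟨i, rfl⟩ := finSumFinEquiv.surjective i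
    obtain ⟨j, rfl⟩ := finSumFinEquiv.surjective j
    rcases i with i | i <;> rcases j with j | j
    · simpa using M.2 i j hij
    all_goals simp⟩
  map_mul' M N := Subtype.ext (by simp [Matrix.fromBlocks_multiply, Matrix.submatrix_mul_equiv])

theorem blockEmbedding_injective (k m : ℕ) :
    Function.Injective (blockEmbedding (S := S) k m) := by
  intro M N h
  ext i j
  simpa [blockEmbedding] using
    congrArg (fun P : UT (k + m) S => P.1 (finSumFinEquiv (.inl i)) (finSumFinEquiv (.inl j))) h

theorem exists_mulHom_two_ne [Nontrivial S]
    (h : Function.Injective fun f : S[X] => fun x : S => f.eval x)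
    {A : Type*} {u v : FreeSemigroup A} (huv : u ≠ v) :
    ∃ φ : FreeSemigroup A →ₙ* UT 2 S, φ u ≠ φ v := by
  obtain ⟨code, hcode⟩ := exists_wordPolynomial_ne (S := S)
    (FreeMonoid.toList.injective.ne (FreeSemigroup.toFreeMonoid_injective.ne huv))
  obtain ⟨x, y, hxy⟩ := exists_evalEval_ne h hcode
  let ψ := (wordMatrixHom code x y).codRestrict (UT 2 S) fun w => by
    rw [mem_two_iff, ← FreeMonoid.ofList_toList w, wordMatrixHom_ofList]
    rfl
  have entry (w : FreeMonoid A) :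
      (ψ w : Matrix (Fin 2) (Fin 2) S) 0 1 = (wordPolynomial code w.toList).evalEval x y := by
    obtain ⟨l, rfl⟩ := FreeMonoid.ofList.surjective w
    simp [ψ, wordMatrixHom_ofList]
  refine ⟨ψ.toMulHom.comp FreeSemigroup.toFreeMonoid, fun e => hxy ?_⟩
  rw [← entry, ← entry]
  exact congrArg (fun M : UT 2 S => M.1 0 1) e

end UT

/-- If distinct one-variable formal polynomials over `S` define distinct
functions `S → S`, then `UT_2(S)` satisfies no nontrivial semigroup identity, and hence for
every `n ≥ 2` neither does `UT_n(S)` nor the full matrix semigroup `M_n(S)`. -/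
theorem no_identity_of_separating_polynomials {S : Type*} [CommSemiring S] [Nontrivial S]
    (h : Function.Injective (fun f : Polynomial S => fun x : S => Polynomial.eval x f)) :
    (∀ (A : Type u) (x y : FreeSemigroup A), x ≠ y →
        ∃ φ : FreeSemigroup A →ₙ* (UT 2 S), φ x ≠ φ y) ∧
    (∀ n : ℕ, 2 ≤ n →
      (∀ (A : Type u) (x y : FreeSemigroup A), x ≠ y →
          ∃ φ : FreeSemigroup A →ₙ* (UT n S), φ x ≠ φ y) ∧
      (∀ (A : Type u) (x y : FreeSemigroup A), x ≠ y →
          ∃ φ : FreeSemigroup A →ₙ* Matrix (Fin n) (Fin n) S, φ x ≠ φ y)) := by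
  have hUT (n : ℕ) (hn : 2 ≤ n) (A : Type u) (x y : FreeSemigroup A) (hxy : x ≠ y) :
      ∃ φ : FreeSemigroup A →ₙ* UT n S, φ x ≠ φ y := by
    obtain ⟨m, rfl⟩ := Nat.exists_eq_add_of_le hn
    exact (UT.blockEmbedding 2 m).exists_comp_ne_of_injective (UT.blockEmbedding_injective 2 m)
      (UT.exists_mulHom_two_ne h hxy)
  refine ⟨fun A x y => UT.exists_mulHom_two_ne h, fun n hn => ⟨hUT n hn, fun A x y hxy => ?_⟩⟩
  exact (UT n S).subtype.toMulHom.exists_comp_ne_of_injective Subtype.val_injective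
    (hUT n hn A x y hxy)
end

section
/- Let k be a field. Then UT_2(k) contains a free subsemigroup of rank 2 — that is, there exist A, B ∈ UT_2(k) such that the semigroup homomorphism from the free semigroup on two generators a, b to UT_2(k) sending a ↦ A and b ↦ B is injective — if and only if k is not locally finite, i.e., some finitely generated subfield of k is infinite. -/
open Polynomial

namespace FreeSemigroup

instance {α : Type*} [Nonempty α] : Infinite (FreeSemigroup α) := by
  obtain ⟨a⟩ := ‹Nonempty α›
  refine Infinite.of_injective (fun n : ℕ => (⟨a, List.replicate n a⟩ : FreeSemigroup α)) ?_
  intro n m h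
  simpa using congrArg (fun w : FreeSemigroup α => w.tail.length) h

theorem injective_lift_comp_iff {α M N G : Type*} [Semigroup M] [Semigroup N] [FunLike G M N]
    [MulHomClass G M N] {g : G} (hg : Function.Injective g) (f : α → M) :
    Function.Injective (lift (g ∘ f)) ↔ Function.Injective (lift f) := by
  have : lift (g ∘ f) = (g : M →ₙ* N).comp (lift f) := hom_ext rfl
  rw [this, MulHom.coe_comp]
  exact hg.of_comp_iff _

end FreeSemigroup

def HasFreeSubsemigroupOfRankTwo (M : Type*) [Semigroup M] : Prop :=
  ∃ A B : M, Function.Injective (FreeSemigroup.lift fun x : Bool => if x then A else B)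

theorem exists_infinite_subfieldClosure_of_injective_lift {α ι k : Type*} [Finite α] [Nonempty α]
    [Fintype ι] [DivisionRing k] (f : α → Matrix ι ι k)
    (hf : Function.Injective (FreeSemigroup.lift f)) :
    ∃ s : Finset k, Infinite (Subfield.closure (s : Set k)) := by
  classical
  have hfin := Set.finite_range fun p : α × ι × ι => f p.1 p.2.1 p.2.2
  refine ⟨hfin.toFinset, ?_⟩
  rw [hfin.coe_toFinset]
  set F := Subfield.closure (Set.range fun p : α × ι × ι => f p.1 p.2.1 p.2.2)
  by_contra hF
  rw [not_infinite_iff_finite] at hF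
  let f' : α → Matrix ι ι F := fun a i j => ⟨f a i j, Subfield.subset_closure ⟨(a, i, j), rfl⟩⟩
  have hf' : F.subtype.mapMatrix ∘ f' = f := rfl
  rw [← hf', FreeSemigroup.injective_lift_comp_iff (Matrix.map_injective Subtype.val_injective)]
    at hf
  have := Finite.of_injective _ hf
  exact not_finite (FreeSemigroup α)

section BinaryBase

variable {R : Type*} [Semiring R]

/-- `x ↦ t * x` and `x ↦ 1 + t * x` are injective with disjoint ranges, so that expansions in
base `t` with digits `0, 1` are unique once their length is fixed. -/
def IsBinaryBase (t : R) : Prop :=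
  Function.Injective fun p : Bool × R => (p.1.toNat : R) + t * p.2

theorem IsBinaryBase.injective_pow_length_ofDigits {t : R} (ht : IsBinaryBase t) :
    Function.Injective fun l : List Bool => (t ^ l.length, Nat.ofDigits t (l.map Bool.toNat)) := by
  have one_ne_mul (x : R) : 1 ≠ t * x := fun h ↦ by
    simpa using congrArg Prod.fst (@ht (true, 0) (false, x) (by simpa using h))
  intro l
  induction l with
  | nil =>
    rintro (_ | ⟨b, l'⟩) h
    · rfl
    · exact absurd (congrArg Prod.fst h) (by simpa [pow_succ'] using one_ne_mul _)
  | cons b l ih =>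
    rintro (_ | ⟨b', l'⟩) h
    · exact absurd (congrArg Prod.fst h).symm (by simpa [pow_succ'] using one_ne_mul _)
    · simp only [List.length_cons, pow_succ', List.map_cons, Nat.ofDigits, Prod.mk.injEq] at h
      obtain ⟨rfl, hl⟩ := Prod.ext_iff.mp (@ht (b, _) (b', _) h.2)
      have hpow := congrArg Prod.snd (@ht (false, _) (false, _) (by simpa using h.1))
      rw [ih (Prod.ext hpow hl)]

def digitMatrix (t : R) (b : Bool) : Matrix (Fin 2) (Fin 2) R := !![t, b.toNat; 0, 1]

theorem prod_map_digitMatrix (t : R) (l : List Bool) :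
    (l.map (digitMatrix t)).prod = !![t ^ l.length, Nat.ofDigits t (l.map Bool.toNat); 0, 1] := by
  induction l with
  | nil => simp [Matrix.one_fin_two, Nat.ofDigits]
  | cons b l ih =>
    rw [List.map_cons, List.prod_cons, ih, digitMatrix, Matrix.mul_fin_two]
    simp [Nat.ofDigits, pow_succ', add_comm]

theorem IsBinaryBase.injective_lift_digitMatrix {t : R} (ht : IsBinaryBase t) :
    Function.Injective (FreeSemigroup.lift (digitMatrix t)) := by
  have hlift : FreeSemigroup.lift (digitMatrix t) =
      (fun l : List Bool => (l.map (digitMatrix t)).prod) ∘ FreeMonoid.toList ∘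
        FreeSemigroup.toFreeMonoid := by
    ext1 w
    rw [Function.comp_apply, Function.comp_apply, ← FreeMonoid.lift_apply]
    exact DFunLike.congr_fun (FreeSemigroup.hom_ext (f := FreeSemigroup.lift (digitMatrix t))
      (g := (FreeMonoid.lift (digitMatrix t)).toMulHom.comp FreeSemigroup.toFreeMonoid) rfl) w
  rw [hlift]
  refine Function.Injective.comp ?_
    (FreeMonoid.toList.injective.comp FreeSemigroup.toFreeMonoid_injective)
  intro l l' h
  simp only [prod_map_digitMatrix] at h
  apply ht.injective_pow_length_ofDigits
  simpa [Prod.ext_iff] using ⟨congrFun (congrFun h 0) 0, congrFun (congrFun h 0) 1⟩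

theorem Nat.isBinaryBase_two : IsBinaryBase (2 : ℕ) := by
  rintro ⟨_ | _, x⟩ ⟨_ | _, y⟩ h <;> simp at h <;> simp <;> omega

theorem Polynomial.isBinaryBase_X [Nontrivial R] : IsBinaryBase (X : R[X]) := by
  rintro ⟨b, p⟩ ⟨b', q⟩ h
  have hb := congrArg (coeff · 0) h
  have hpq : p = q := Polynomial.ext fun n => by simpa using congrArg (coeff · (n + 1)) h
  subst hpq
  cases b <;> cases b' <;> simp at hb ⊢

end BinaryBase

theorem digitMatrix_mem_UT {R : Type*} [CommSemiring R] (t : R) (b : Bool) :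
    digitMatrix t b ∈ UT 2 R := by
  intro i j hij
  fin_cases i <;> fin_cases j <;> simp_all [digitMatrix]

theorem RingHom.mapMatrix_digitMatrix {R S : Type*} [Semiring R] [Semiring S] (φ : R →+* S)
    (t : R) (b : Bool) : φ.mapMatrix (digitMatrix t b) = digitMatrix (φ t) b := by
  ext i j
  fin_cases i <;> fin_cases j <;> simp [digitMatrix]

theorem IsBinaryBase.hasFreeSubsemigroupOfRankTwo_UT {R k : Type*} [CommSemiring R]
    [CommSemiring k] {t : R} (ht : IsBinaryBase t) {φ : R →+* k} (hφ : Function.Injective φ) :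
    HasFreeSubsemigroupOfRankTwo (UT 2 k) := by
  let gen (b : Bool) : UT 2 k := ⟨digitMatrix (φ t) b, digitMatrix_mem_UT _ _⟩
  refine ⟨gen true, gen false, ?_⟩
  have hgen : (UT 2 k).subtype ∘ (fun x : Bool => if x then gen true else gen false) =
      φ.mapMatrix ∘ digitMatrix t := by
    funext b
    cases b <;> exact (φ.mapMatrix_digitMatrix t _).symm
  rw [← FreeSemigroup.injective_lift_comp_iff (UT 2 k).subtype_injective, hgen,
    FreeSemigroup.injective_lift_comp_iff (Matrix.map_injective hφ)]
  exact ht.injective_lift_digitMatrix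

theorem exists_transcendental_of_infinite_subfieldClosure {K k : Type*} [Field K] [Finite K]
    [Field k] [Algebra K k] {s : Finset k} (hs : Infinite (Subfield.closure (s : Set k))) :
    ∃ t : k, Transcendental K t := by
  by_contra! hall
  simp only [Transcendental, not_not] at hall
  have : FiniteDimensional K (IntermediateField.adjoin K (s : Set k)) :=
    IntermediateField.finiteDimensional_adjoin fun x _ => (hall x).isIntegral
  have : Finite (IntermediateField.adjoin K (s : Set k)) := Module.finite_of_finite K
  have hle : Subfield.closure (s : Set k) ≤ (IntermediateField.adjoin K (s : Set k)).toSubfield :=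
    Subfield.closure_le.mpr (IntermediateField.subset_adjoin _ _)
  have := Finite.Set.subset _ hle
  exact not_finite (Subfield.closure (s : Set k))

theorem hasFreeSubsemigroupOfRankTwo_UT_of_infinite_subfieldClosure {k : Type*} [Field k]
    {s : Finset k} (hs : Infinite (Subfield.closure (s : Set k))) :
    HasFreeSubsemigroupOfRankTwo (UT 2 k) := by
  obtain ⟨p, _⟩ := CharP.exists k
  rcases CharP.char_is_prime_or_zero k p with hp | rfl
  · have := Fact.mk hp
    let := ZMod.algebra k p
    obtain ⟨t, ht⟩ := exists_transcendental_of_infinite_subfieldClosure (K := ZMod p) hs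
    exact Polynomial.isBinaryBase_X.hasFreeSubsemigroupOfRankTwo_UT
      (φ := (aeval t).toRingHom) (transcendental_iff_injective.mp ht)
  · have := CharP.charP_to_charZero k
    exact Nat.isBinaryBase_two.hasFreeSubsemigroupOfRankTwo_UT (φ := Nat.castRingHom k)
      Nat.cast_injective

/-- For a field `k`, `UT_2(k)` contains a free subsemigroup of rank 2
if and only if `k` is not locally finite, i.e. some finitely generated subfield of `k`
is infinite. -/
theorem UT2_free_subsemigroup_iff_not_locally_finite (k : Type*) [Field k] :
    (∃ A B : (UT 2 k),
        Function.Injective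
          ⇑(FreeSemigroup.lift (fun x : Bool => if x then A else B) :
              FreeSemigroup Bool →ₙ* (UT 2 k))) ↔
      ∃ s : Finset k, Infinite (Subfield.closure (s : Set k)) := by
  refine ⟨fun ⟨A, B, hAB⟩ => ?_, fun ⟨s, hs⟩ =>
    hasFreeSubsemigroupOfRankTwo_UT_of_infinite_subfieldClosure hs⟩
  rw [← FreeSemigroup.injective_lift_comp_iff (UT 2 k).subtype_injective] at hAB
  exact exists_infinite_subfieldClosure_of_injective_lift _ hAB
end

section
/- Let S be a commutative semiring with 0 and 1 and n ≥ 1. Suppose that for every finite set X of variables, the semiring of polynomial functions over S in variables X — the image of the evaluation homomorphism from S[X] to the semiring of functions (X → S) → S with pointwise operations — is locally finite. Then for every finite alphabet Σ, the quotient of the free monoid Σ* by the congruence (u ~ v if and only if the monoid identity u = v holds in UT_n(S)) is a finite monoid; that is, the free objects of finite rank in the monoid variety generated by UT_n(S) are finite. -/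
/-- The congruence on the free monoid `Σ*` identifying `u` and `v` whenever the monoid
identity `u = v` holds in `UT_n(S)`. -/
def idCon (S : Type*) [CommSemiring S] (n : ℕ) (A : Type*) : Con (FreeMonoid A) where
  r u v := ∀ φ : FreeMonoid A →* (UT n S), φ u = φ v
  iseqv := ⟨fun _ _ => rfl, fun h φ => (h φ).symm, fun h₁ h₂ φ => (h₁ φ).trans (h₂ φ)⟩
  mul' := fun h₁ h₂ φ => by rw [map_mul, map_mul, h₁ φ, h₂ φ]

namespace UT

variable {n : ℕ} {R T : Type*} [CommSemiring R] [CommSemiring T]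

def map (f : R →+* T) : UT n R →* UT n T :=
  ((f.mapMatrix : Matrix (Fin n) (Fin n) R →+* Matrix (Fin n) (Fin n) T).toMonoidHom.comp
    (UT n R).subtype).codRestrict (UT n T) fun M i j h => by simp [M.2 i j h]

@[simp]
lemma map_apply (f : R →+* T) (M : UT n R) (i j : Fin n) :
    (map f M : Matrix (Fin n) (Fin n) T) i j = f ((M : Matrix (Fin n) (Fin n) R) i j) :=
  rfl

end UT

lemma idCon_eq_ker {S R ι : Type*} [CommSemiring S] [CommSemiring R] {n : ℕ} {A : Type*}
    (ψ : FreeMonoid A →* UT n R) (e : ι → R →+* S)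
    (he : ∀ x y, (∀ k, e k x = e k y) → x = y)
    (hψ : ∀ φ : FreeMonoid A →* UT n S, ∃ k, φ = (UT.map (e k)).comp ψ) :
    idCon S n A = Con.ker ψ := by
  ext u v
  rw [Con.ker_rel]
  constructor
  · intro h
    refine Subtype.ext <| Matrix.ext fun i j => he _ _ fun k => ?_
    simpa using congrArg (fun M : UT n S => (M : Matrix (Fin n) (Fin n) S) i j)
      (h ((UT.map (e k)).comp ψ))
  · intro h φ
    obtain ⟨k, rfl⟩ := hψ φ
    simp [h]

section PolynomialFunctions

variable (S : Type*) [CommSemiring S] (X : Type*)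

noncomputable abbrev polyFun : Subsemiring ((X → S) → S) :=
  (RingHom.pi fun ν : X → S => MvPolynomial.eval ν).rangeS

noncomputable def polyFun.coord (x : X) : polyFun S X :=
  ⟨fun ν => ν x, MvPolynomial.X x, funext fun _ => MvPolynomial.eval_X x⟩

noncomputable abbrev coordClosure : Subsemiring (polyFun S X) :=
  Subsemiring.closure (Set.range (polyFun.coord S X))

variable {S X}

noncomputable def coordClosure.evalAt (ν : X → S) : coordClosure S X →+* S :=
  ((Pi.evalRingHom (fun _ => S) ν).comp (polyFun S X).subtype).comp (coordClosure S X).subtype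

lemma coordClosure.ext_of_evalAt {f g : coordClosure S X} (h : ∀ ν, evalAt ν f = evalAt ν g) :
    f = g :=
  Subtype.ext <| Subtype.ext <| funext h

lemma finite_coordClosure [Finite X]
    (hS : ∀ T : Finset (polyFun S X), ((Subsemiring.closure (T : Set (polyFun S X))) :
      Set (polyFun S X)).Finite) :
    Finite (coordClosure S X) := by
  have hT := hS (Set.finite_range (polyFun.coord S X)).toFinset
  rw [Set.Finite.coe_toFinset] at hT
  exact hT.to_subtype

end PolynomialFunctions

open polyFun coordClosure

namespace GenericMatrix

variable (S : Type*) [CommSemiring S] (n : ℕ) {A : Type*}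

noncomputable def of (a : A) : UT n (coordClosure S (A × Fin n × Fin n)) :=
  ⟨Matrix.of fun i j => if j < i then 0 else
      ⟨coord S _ (a, i, j), Subsemiring.subset_closure ⟨_, rfl⟩⟩,
    fun _ _ h => if_pos h⟩

noncomputable def lift : FreeMonoid A →* UT n (coordClosure S (A × Fin n × Fin n)) :=
  FreeMonoid.lift (of S n)

variable {S n}

lemma exists_eq_map_comp_lift (φ : FreeMonoid A →* UT n S) :
    ∃ ν, φ = (UT.map (evalAt ν)).comp (lift S n) := by
  refine ⟨fun p => (φ (FreeMonoid.of p.1) : Matrix (Fin n) (Fin n) S) p.2.1 p.2.2,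
    FreeMonoid.hom_eq fun a => Subtype.ext <| Matrix.ext fun i j => ?_⟩
  by_cases h : j < i
  · simp [lift, of, h, (φ (FreeMonoid.of a)).2 i j h]
  · simp [lift, of, h, evalAt, coord]

end GenericMatrix

theorem free_objects_finite_of_locally_finite_polyfun_general {S : Type*} [CommSemiring S]
    (n : ℕ)
    (hS : ∀ (X : Type) [Fintype X],
      ∀ T : Finset ↥(Pi.ringHom (fun ν : X → S => MvPolynomial.eval ν)).rangeS,
        ((Subsemiring.closure (T : Set ↥(Pi.ringHom
            (fun ν : X → S => MvPolynomial.eval ν)).rangeS)) :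
          Set ↥(Pi.ringHom (fun ν : X → S => MvPolynomial.eval ν)).rangeS).Finite) :
    ∀ (A : Type) [Fintype A], Finite ((idCon S n A).Quotient) := by
  intro A _
  have := finite_coordClosure (hS (A × Fin n × Fin n))
  rw [idCon_eq_ker (GenericMatrix.lift S n) evalAt (fun _ _ => ext_of_evalAt)
    GenericMatrix.exists_eq_map_comp_lift]
  exact Finite.of_injective _ (Con.kerLift_injective _)

/-- If for every finite variable set `X` the semiring of polynomial
functions over `S` (the image of `S[X]` in the semiring of functions `(X → S) → S`) is
locally finite, then for every finite alphabet the free object in the monoid variety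
generated by `UT_n(S)` — the quotient of the free monoid by the identities of `UT_n(S)` —
is finite. -/
theorem free_objects_finite_of_locally_finite_polyfun {S : Type*} [CommSemiring S]
    [Nontrivial S] (n : ℕ) (hn : 1 ≤ n)
    (hS : ∀ (X : Type) [Fintype X],
      ∀ T : Finset ↥(Pi.ringHom (fun ν : X → S => MvPolynomial.eval ν)).rangeS,
        ((Subsemiring.closure (T : Set ↥(Pi.ringHom
            (fun ν : X → S => MvPolynomial.eval ν)).rangeS)) :
          Set ↥(Pi.ringHom (fun ν : X → S => MvPolynomial.eval ν)).rangeS).Finite) :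
    ∀ (A : Type) [Fintype A], Finite ((idCon S n A).Quotient) :=
  free_objects_finite_of_locally_finite_polyfun_general n hS
end

section
/- Let S be a commutative semiring with 0 and 1 and let n ≥ 1. The following are equivalent: (i) for every finite alphabet Σ, the quotient of the free monoid Σ* by the congruence (u ~ v if and only if the monoid identity u = v holds in UT_n(S)) is finite; (ii) there exist a finite alphabet Σ and words u, v ∈ Σ⁺ with distinct abelianizations (that is, the multisets of letters of u and v differ) such that φ(u) = φ(v) for every semigroup homomorphism φ from Σ⁺ to the multiplicative semigroup of S; (iii) there exist natural numbers i < j such that a^i = a^j for every a ∈ S. -/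
/-- The abelianisation of a nonempty word: the multiset of its letters. -/
def abelianization {A : Type*} (u : FreeSemigroup A) : Multiset A :=
  ((u.head :: u.tail : List A) : Multiset A)

/-!
In a commutative monoid the value of a word depends only on its abelianization. Sending a letter
`x` to `a` and all other letters to `1` turns an identity `u = v` with different numbers of `x`'s
into `a ^ k = a ^ l` with `k ≠ l`; conversely `a ^ i = a ^ j` gives the identity
`x ^ (i + 1) = x ^ (j + 1)`. If the free object on one letter is finite, two powers `x ^ k`,
`x ^ l` are identified in `UT_n(S)`, and scalar matrices give `a ^ k = a ^ l`.

For the remaining implication, two words are identified iff they agree on the generic matrices,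
whose entries are the coordinate functions on `(UT_n(S))^Σ`. These live in a commutative semiring
satisfying `a ^ i = a ^ j`, where a finitely generated subsemiring is finite: monomials need only
exponents below `j`, and since `2 ^ i • x = 2 ^ j • x`, coefficients need only be below `2 ^ j`.
-/

@[to_additive]
theorem exists_lt_pow_eq_pow {M : Type*} [Monoid M] {a : M} {i j : ℕ} (hij : i < j)
    (ha : a ^ i = a ^ j) (e : ℕ) : ∃ e' < j, a ^ e = a ^ e' := by
  induction e using Nat.strong_induction_on with
  | _ e ih =>
    rcases lt_or_ge e j with he | he
    · exact ⟨e, he, rfl⟩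
    · obtain ⟨e', he', heq⟩ := ih (e - j + i) (by omega)
      refine ⟨e', he', Eq.trans ?_ heq⟩
      calc a ^ e = a ^ (e - j) * a ^ j := by rw [← pow_add, Nat.sub_add_cancel he]
        _ = a ^ (e - j + i) := by rw [← ha, pow_add]

theorem exists_lt_forall_pow_eq_pow_of_ne {M : Type*} [Monoid M] {k l : ℕ} (hkl : k ≠ l)
    (h : ∀ a : M, a ^ k = a ^ l) : ∃ i j : ℕ, i < j ∧ ∀ a : M, a ^ i = a ^ j := by
  rcases hkl.lt_or_gt with hlt | hgt
  exacts [⟨k, l, hlt, h⟩, ⟨l, k, hgt, fun a => (h a).symm⟩]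

@[to_additive]
theorem Submonoid.closure_finite_of_pow_eq_pow {M : Type*} [CommMonoid M] {s : Set M}
    (hs : s.Finite) {i j : ℕ} (hij : i < j) (h : ∀ a ∈ s, a ^ i = a ^ j) :
    (closure s : Set M).Finite := by
  have := hs.fintype
  refine (Set.finite_range fun e : s → Fin j => ∏ a : s, a.1 ^ (e a : ℕ)).subset ?_
  intro x hx
  obtain ⟨e, rfl⟩ := mem_closure_iff_of_fintype.1 hx
  choose e' he' heq using fun a : s => exists_lt_pow_eq_pow hij (h a a.2) (e a)
  exact ⟨fun a => ⟨e' a, he' a⟩, Finset.prod_congr rfl fun a _ => (heq a).symm⟩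

theorem Subsemiring.closure_finite_of_pow_eq_pow {R : Type*} [CommSemiring R] {s : Set R}
    (hs : s.Finite) {i j : ℕ} (hij : i < j) (h : ∀ a : R, a ^ i = a ^ j) :
    (closure s : Set R).Finite := by
  rw [coe_closure_eq]
  refine AddSubmonoid.closure_finite_of_nsmul_eq_nsmul
    (Submonoid.closure_finite_of_pow_eq_pow hs hij fun a _ => h a)
    (Nat.pow_lt_pow_right one_lt_two hij) fun x _ => ?_
  simp only [nsmul_eq_mul, Nat.cast_pow, Nat.cast_ofNat, h 2]

theorem Matrix.closure_finite_of_pow_eq_pow {m R : Type*} [Fintype m] [DecidableEq m]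
    [CommSemiring R] {s : Set (Matrix m m R)} (hs : s.Finite) {i j : ℕ} (hij : i < j)
    (h : ∀ a : R, a ^ i = a ^ j) : (Submonoid.closure s : Set (Matrix m m R)).Finite := by
  set T := Subsemiring.closure (⋃ M ∈ s, Set.range fun pq : m × m => M pq.1 pq.2)
  have hT : (T : Set R).Finite := Subsemiring.closure_finite_of_pow_eq_pow
    (hs.biUnion fun M _ => Set.finite_range _) hij h
  refine (Set.Finite.pi' fun _ => Set.Finite.pi' fun _ => hT).subset
    fun (M : Matrix m m R) hM => ?_
  induction hM using Submonoid.closure_induction with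
  | mem M hM => exact fun p q => Subsemiring.subset_closure (Set.mem_biUnion hM ⟨(p, q), rfl⟩)
  | one =>
    intro p q
    rcases eq_or_ne p q with rfl | hpq <;> simp [Matrix.one_apply_ne, *]
  | mul M N _ _ hM hN =>
    exact fun p q => T.sum_mem fun k _ => T.mul_mem (hM p k) (hN k q)

def genericMatrix (S : Type*) [CommSemiring S] (n : ℕ) (A : Type*) :
    A → Matrix (Fin n) (Fin n) ((A → UT n S) → S) :=
  fun a p q f => (f a : Matrix (Fin n) (Fin n) S) p q

theorem mapMatrix_eval_lift_genericMatrix {S : Type*} [CommSemiring S] {n : ℕ} {A : Type*}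
    (f : A → UT n S) (w : FreeMonoid A) :
    (Pi.evalRingHom (fun _ => S) f).mapMatrix (FreeMonoid.lift (genericMatrix S n A) w) =
      FreeMonoid.lift f w := by
  induction w using FreeMonoid.inductionOn' with
  | one => simp
  | of_mul a w ih =>
    rw [map_mul, map_mul, map_mul, ih, FreeMonoid.lift_eval_of, FreeMonoid.lift_eval_of]
    rfl

theorem idCon_eq_ker_lift_genericMatrix (S : Type*) [CommSemiring S] (n : ℕ) (A : Type*) :
    idCon S n A = Con.ker (FreeMonoid.lift (genericMatrix S n A)) := by
  ext u v
  rw [Con.ker_rel]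
  constructor
  · intro h
    ext p q f
    have := congr_arg (fun B : UT n S => (B : Matrix _ _ S) p q) (h (FreeMonoid.lift f))
    simpa only [← mapMatrix_eval_lift_genericMatrix, RingHom.mapMatrix_apply, Matrix.map_apply,
      Pi.evalRingHom_apply] using this
  · intro h φ
    rw [← FreeMonoid.lift_restrict φ]
    ext1
    rw [← mapMatrix_eval_lift_genericMatrix, ← mapMatrix_eval_lift_genericMatrix, h]

theorem finite_idCon_quotient {S : Type*} [CommSemiring S] {i j : ℕ} (hij : i < j)
    (h : ∀ a : S, a ^ i = a ^ j) (n : ℕ) (A : Type*) [Finite A] :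
    Finite (idCon S n A).Quotient := by
  rw [idCon_eq_ker_lift_genericMatrix]
  have : (SetLike.coe (MonoidHom.mrange (FreeMonoid.lift (genericMatrix S n A)))).Finite := by
    rw [FreeMonoid.mrange_lift]
    exact Matrix.closure_finite_of_pow_eq_pow (Set.finite_range _) hij
      fun r => funext fun f => h (r f)
  have := this.to_subtype
  exact .of_equiv _ (Con.quotientKerEquivRange _).toEquiv.symm

theorem pow_eq_pow_of_idCon {S : Type*} [CommSemiring S] {n : ℕ} (hn : 1 ≤ n) {A : Type*}
    (x : A) {k l : ℕ} (h : idCon S n A (FreeMonoid.of x ^ k) (FreeMonoid.of x ^ l)) (a : S) :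
    a ^ k = a ^ l := by
  have : Nonempty (Fin n) := ⟨⟨0, hn⟩⟩
  let scalarUT : UT n S :=
    ⟨Matrix.scalar (Fin n) a, fun p q hpq => Matrix.diagonal_apply_ne' _ hpq.ne⟩
  have := congr_arg Subtype.val (h (FreeMonoid.lift fun _ => scalarUT))
  rw [← Matrix.scalar_inj (n := Fin n), map_pow, map_pow]
  simpa [scalarUT] using this

theorem exists_lt_forall_pow_eq_pow_of_finite_idCon {S : Type*} [CommSemiring S] {n : ℕ}
    (hn : 1 ≤ n) (h : Finite (idCon S n Unit).Quotient) :
    ∃ i j : ℕ, i < j ∧ ∀ a : S, a ^ i = a ^ j := by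
  obtain ⟨k, l, hkl, heq⟩ := Finite.exists_ne_map_eq_of_infinite
    fun k : ℕ => ((FreeMonoid.of () ^ k : FreeMonoid Unit) : (idCon S n Unit).Quotient)
  exact exists_lt_forall_pow_eq_pow_of_ne hkl (pow_eq_pow_of_idCon hn () ((Con.eq _).1 heq))

theorem abelianization_of {A : Type*} (x : A) : abelianization (FreeSemigroup.of x) = {x} := rfl

theorem abelianization_mul {A : Type*} (u v : FreeSemigroup A) :
    abelianization (u * v) = abelianization u + abelianization v := by
  simp [abelianization, FreeSemigroup.head_mul, FreeSemigroup.tail_mul]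

theorem map_eq_prod_abelianization {A M : Type*} [CommMonoid M] (φ : FreeSemigroup A →ₙ* M)
    (w : FreeSemigroup A) : φ w = ((abelianization w).map (φ ∘ FreeSemigroup.of)).prod := by
  induction w using FreeSemigroup.recOnMul with
  | ih1 x => simp [abelianization_of]
  | ih2 u v hu hv => rw [map_mul, hu, hv, abelianization_mul, Multiset.map_add, Multiset.prod_add]

theorem exists_abelianization_ne_of_pow_eq_pow {M : Type*} [CommMonoid M] {i j : ℕ}
    (hij : i < j) (h : ∀ a : M, a ^ i = a ^ j) :
    ∃ (A : Type) (_ : Fintype A) (u v : FreeSemigroup A),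
      abelianization u ≠ abelianization v ∧ ∀ φ : FreeSemigroup A →ₙ* M, φ u = φ v := by
  have abelianization_mk (k : ℕ) : abelianization (⟨(), List.replicate k ()⟩ : FreeSemigroup Unit)
      = Multiset.replicate (k + 1) () := rfl
  refine ⟨Unit, inferInstance, ⟨(), List.replicate i ()⟩, ⟨(), List.replicate j ()⟩, ?_, ?_⟩
  · rw [abelianization_mk, abelianization_mk]
    exact fun hc => hij.ne (by simpa using congr_arg Multiset.card hc)
  · intro φ
    rw [map_eq_prod_abelianization, map_eq_prod_abelianization, abelianization_mk,
      abelianization_mk]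
    simp [h]

theorem exists_lt_forall_pow_eq_pow_of_abelianization_ne {M : Type*} [CommMonoid M]
    {A : Type*} {u v : FreeSemigroup A} (huv : abelianization u ≠ abelianization v)
    (h : ∀ φ : FreeSemigroup A →ₙ* M, φ u = φ v) :
    ∃ i j : ℕ, i < j ∧ ∀ a : M, a ^ i = a ^ j := by
  classical
  obtain ⟨x, hx⟩ := not_forall.1 (mt Multiset.ext.2 huv)
  refine exists_lt_forall_pow_eq_pow_of_ne hx fun a => ?_
  have hφ (w : FreeSemigroup A) :
      FreeSemigroup.lift (Pi.mulSingle x a) w = a ^ (abelianization w).count x := by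
    rw [map_eq_prod_abelianization, Multiset.prod_map_eq_pow_single x]
    · simp
    · intro y hy _
      simp [hy]
  rw [← hφ, ← hφ, h]

theorem locally_finite_tfae_general {S : Type*} [CommSemiring S]
    (n : ℕ) (hn : 1 ≤ n) :
    ((∀ (A : Type) [Fintype A], Finite ((idCon S n A).Quotient)) ↔
      (∃ (A : Type) (_ : Fintype A) (u v : FreeSemigroup A),
        abelianization u ≠ abelianization v ∧
          ∀ φ : FreeSemigroup A →ₙ* S, φ u = φ v)) ∧
    ((∃ (A : Type) (_ : Fintype A) (u v : FreeSemigroup A),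
        abelianization u ≠ abelianization v ∧
          ∀ φ : FreeSemigroup A →ₙ* S, φ u = φ v) ↔
      (∃ i j : ℕ, i < j ∧ ∀ a : S, a ^ i = a ^ j)) := by
  refine ⟨⟨fun h => ?_, fun ⟨_, _, _, _, huv, h⟩ A _ => ?_⟩,
    ⟨fun ⟨_, _, _, _, huv, h⟩ => exists_lt_forall_pow_eq_pow_of_abelianization_ne huv h,
      fun ⟨_, _, hij, h⟩ => exists_abelianization_ne_of_pow_eq_pow hij h⟩⟩
  · obtain ⟨i, j, hij, h⟩ := exists_lt_forall_pow_eq_pow_of_finite_idCon hn (h Unit)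
    exact exists_abelianization_ne_of_pow_eq_pow hij h
  · obtain ⟨i, j, hij, h⟩ := exists_lt_forall_pow_eq_pow_of_abelianization_ne huv h
    exact finite_idCon_quotient hij h n A

/-- For a commutative semiring `S` and `n ≥ 1`, the following are
equivalent: (i) the monoid variety generated by `UT_n(S)` is locally finite (its finite
rank free objects are finite); (ii) `S` satisfies a multiplicative identity not implied by
commutativity (one whose two sides have distinct abelianizations); (iii) `S` satisfies a
multiplicative torsion identity `a^i = a^j`, `i < j`. -/
theorem locally_finite_tfae {S : Type*} [CommSemiring S] [Nontrivial S]
    (n : ℕ) (hn : 1 ≤ n) :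
    ((∀ (A : Type) [Fintype A], Finite ((idCon S n A).Quotient)) ↔
      (∃ (A : Type) (_ : Fintype A) (u v : FreeSemigroup A),
        abelianization u ≠ abelianization v ∧
          ∀ φ : FreeSemigroup A →ₙ* S, φ u = φ v)) ∧
    ((∃ (A : Type) (_ : Fintype A) (u v : FreeSemigroup A),
        abelianization u ≠ abelianization v ∧
          ∀ φ : FreeSemigroup A →ₙ* S, φ u = φ v) ↔
      (∃ i j : ℕ, i < j ∧ ∀ a : S, a ^ i = a ^ j)) :=
  locally_finite_tfae_general n hn
end

section
/- Let Σ be an alphabet. For a nonempty word w = w_1⋯w_m ∈ Σ⁺, let ab(w) denote its abelianization (the multiset of its letters) and Pref(w) = { ab(w_1⋯w_i) : 1 ≤ i ≤ m } the set of abelianized nonempty prefixes of w. Then the map w ↦ (Pref(w), ab(w)) from Σ⁺ to the semidirect product whose underlying set is (sets of multisets over Σ) × (multisets over Σ) and whose multiplication is (X, a)(Y, b) = (X ∪ (a + Y), a + b), where a + Y = { a + y : y ∈ Y } and + is multiset addition, is an injective semigroup homomorphism. In particular, two nonempty words over Σ with the same set of abelianized nonempty prefixes are equal. -/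
/-- The abelianisation of a nonempty word: the multiset of its letters. -/
def abelianization' {A : Type*} (u : FreeSemigroup A) : Multiset A :=
  ((u.head :: u.tail : List A) : Multiset A)

/-- The set of abelianised nonempty prefixes of a nonempty word. -/
def abelianizedPrefixes {A : Type*} (u : FreeSemigroup A) : Set (Multiset A) :=
  {m | ∃ i : ℕ, i < (u.head :: u.tail : List A).length ∧
        m = (((u.head :: u.tail : List A).take (i + 1) : List A) : Multiset A)}

/-- The underlying set of the semidirect product of the commutative monoid of multisets
over `Σ` acting on the semilattice of sets of multisets over `Σ`. -/
structure MultisetSDP (A : Type*) where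
  X : Set (Multiset A)
  a : Multiset A

/-- The semidirect product multiplication `(X, a)(Y, b) = (X ∪ (a + Y), a + b)`. -/
instance {A : Type*} : Mul (MultisetSDP A) :=
  ⟨fun p q => ⟨p.X ∪ (fun y => p.a + y) '' q.X, p.a + q.a⟩⟩

/-- The map `w ↦ (Pref(w), ab(w))`. -/
def toMultisetSDP {A : Type*} (u : FreeSemigroup A) : MultisetSDP A :=
  ⟨abelianizedPrefixes u, abelianization' u⟩

private def prefSet {A : Type*} (l : List A) : Set (Multiset A) :=
  {m | ∃ i : ℕ, i < l.length ∧ m = ((l.take (i + 1) : List A) : Multiset A)}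

private lemma prefSet_cons {A : Type*} (a : A) (l : List A) :
    prefSet (a :: l) = insert ({a} : Multiset A) ((fun m => a ::ₘ m) '' prefSet l) := by
  ext m
  constructor
  · rintro ⟨i, hi, rfl⟩
    cases i with
    | zero => left; simp
    | succ j =>
      right
      refine ⟨((l.take (j + 1) : List A) : Multiset A), ⟨j, by simpa using hi, rfl⟩, ?_⟩
      simp [List.take_succ_cons]
  · rintro (rfl | ⟨m, ⟨j, hj, rfl⟩, rfl⟩)
    · exact ⟨0, by simp, by simp⟩
    · exact ⟨j + 1, by simpa using hj, by simp [List.take_succ_cons]⟩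

private lemma card_pos_of_mem_prefSet {A : Type*} {l : List A} {m : Multiset A}
    (h : m ∈ prefSet l) : 1 ≤ Multiset.card m := by
  obtain ⟨i, hi, rfl⟩ := h
  simp only [Multiset.coe_card, List.length_take]
  omega

private lemma prefSet_eq_empty_iff {A : Type*} (l : List A) : prefSet l = ∅ ↔ l = [] := by
  constructor
  · intro h
    cases l with
    | nil => rfl
    | cons a t =>
      exfalso
      have : ((([a] : List A)) : Multiset A) ∈ prefSet (a :: t) := ⟨0, by simp, by simp⟩
      simp [h] at this
  · rintro rfl
    ext m; simp [prefSet]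

private lemma insert_inj_of_not_mem {α : Type*} {a : α} {S T : Set α} (hS : a ∉ S) (hT : a ∉ T)
    (h : insert a S = insert a T) : S = T := by
  ext x
  constructor
  · intro hx
    have hx' : x ∈ insert a T := h ▸ Set.mem_insert_of_mem a hx
    rcases hx' with rfl | h2
    · exact absurd hx hS
    · exact h2
  · intro hx
    have hx' : x ∈ insert a S := h.symm ▸ Set.mem_insert_of_mem a hx
    rcases hx' with rfl | h2
    · exact absurd hx hT
    · exact h2

private lemma prefSet_injective {A : Type*} :
    ∀ (l l' : List A), prefSet l = prefSet l' → l = l' := by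
  intro l
  induction l with
  | nil =>
    intro l' h
    exact ((prefSet_eq_empty_iff l').mp
      (h.symm.trans ((prefSet_eq_empty_iff ([] : List A)).mpr rfl))).symm
  | cons a t ih =>
    intro l' h
    cases l' with
    | nil =>
      exfalso
      have := (prefSet_eq_empty_iff (a :: t)).mp (h.trans ((prefSet_eq_empty_iff _).mpr rfl))
      simp at this
    | cons b t' =>
      rw [prefSet_cons, prefSet_cons] at h
      have hab : a = b := by
        have hmem : ({a} : Multiset A) ∈ insert ({b} : Multiset A)
            ((fun m => b ::ₘ m) '' prefSet t') := by rw [← h]; exact Set.mem_insert _ _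
        rcases hmem with h1 | ⟨m, hm, hme⟩
        · simpa using h1
        · exfalso
          have hc := card_pos_of_mem_prefSet hm
          have hme' : b ::ₘ m = {a} := hme
          have hcard := congrArg Multiset.card hme'
          simp at hcard
          simp [hcard] at hc
      subst hab
      have hnotmem : ∀ t₀ : List A, ({a} : Multiset A) ∉ (fun m => a ::ₘ m) '' prefSet t₀ := by
        rintro t₀ ⟨m, hm, hme⟩
        have h1 := card_pos_of_mem_prefSet hm
        have hme' : a ::ₘ m = {a} := hme
        have hcard := congrArg Multiset.card hme'
        simp at hcard
        simp [hcard] at h1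
      have himg := insert_inj_of_not_mem (hnotmem t) (hnotmem t') h
      have hinj : Function.Injective (fun m : Multiset A => a ::ₘ m) :=
        fun x y hxy => by simpa using hxy
      rw [ih t' (Set.image_injective.mpr hinj himg)]

private lemma prefSet_append {A : Type*} (l₁ l₂ : List A) :
    prefSet (l₁ ++ l₂) = prefSet l₁ ∪ (fun y => (l₁ : Multiset A) + y) '' prefSet l₂ := by
  have htake : ∀ i : ℕ, l₁.length ≤ i →
      (l₁ ++ l₂).take (i + 1) = l₁ ++ l₂.take (i - l₁.length + 1) := by
    intro i hi
    rw [List.take_append,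
      List.take_of_length_le (l := l₁) (by omega : l₁.length ≤ i + 1)]
    congr 2
    omega
  ext m
  constructor
  · rintro ⟨i, hi, rfl⟩
    simp only [List.length_append] at hi
    by_cases hc : i < l₁.length
    · left
      exact ⟨i, hc, by rw [List.take_append_of_le_length (by omega)]⟩
    · right
      push_neg at hc
      refine ⟨((l₂.take (i - l₁.length + 1) : List A) : Multiset A),
        ⟨i - l₁.length, by omega, rfl⟩, ?_⟩
      rw [htake i hc]
      simp
  · rintro (⟨i, hi, rfl⟩ | ⟨m, ⟨j, hj, rfl⟩, rfl⟩)
    · exact ⟨i, by simp only [List.length_append]; omega,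
        by rw [List.take_append_of_le_length (by omega)]⟩
    · refine ⟨l₁.length + j, by simp only [List.length_append]; omega, ?_⟩
      have h2 := htake (l₁.length + j) (by omega)
      have h3 : l₁.length + j - l₁.length = j := by omega
      rw [h2, h3]
      simp

/-- The map `w ↦ (Pref(w), ab(w))` is an injective semigroup
homomorphism from `Σ⁺` to the semidirect product; in particular two nonempty words with
the same set of abelianised nonempty prefixes are equal. -/
theorem prefixes_semidirect_embedding {A : Type*} :
    (∀ u v : FreeSemigroup A, toMultisetSDP (u * v) = toMultisetSDP u * toMultisetSDP v) ∧
    Function.Injective (toMultisetSDP : FreeSemigroup A → MultisetSDP A) ∧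
    (∀ u v : FreeSemigroup A, abelianizedPrefixes u = abelianizedPrefixes v → u = v) := by
  have hpref : ∀ u : FreeSemigroup A, abelianizedPrefixes u = prefSet (u.head :: u.tail) :=
    fun u => rfl
  have hthird : ∀ u v : FreeSemigroup A, abelianizedPrefixes u = abelianizedPrefixes v → u = v := by
    intro u v h
    rw [hpref, hpref] at h
    have hl := prefSet_injective _ _ h
    obtain ⟨hu, ht⟩ : u.head = v.head ∧ u.tail = v.tail := by simpa using hl
    cases u; cases v; simp_all
  refine ⟨?_, fun u v h => hthird u v (congrArg MultisetSDP.X h), hthird⟩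
  intro u v
  have hl : ((u * v).head :: (u * v).tail : List A)
      = (u.head :: u.tail) ++ (v.head :: v.tail) := rfl
  have hX : abelianizedPrefixes (u * v)
      = abelianizedPrefixes u ∪ (fun y => abelianization' u + y) '' abelianizedPrefixes v := by
    rw [hpref (u * v), hl, prefSet_append]
    rfl
  have ha : abelianization' (u * v) = abelianization' u + abelianization' v := by
    show ((((u * v).head :: (u * v).tail : List A)) : Multiset A) = _
    rw [hl]
    rfl
  show (⟨abelianizedPrefixes (u * v), abelianization' (u * v)⟩ : MultisetSDP A)
      = ⟨abelianizedPrefixes u ∪ (fun y => abelianization' u + y) '' abelianizedPrefixes v,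
         abelianization' u + abelianization' v⟩
  rw [hX, ha]
end

section
/- Let S = {−∞} ∪ ([0,1] ∩ ℚ), equipped with addition x ⊕ y = max(x, y) and multiplication x ⊗ y = min(x + y, 1) (with −∞ absorbing for ⊗ and neutral for ⊕). Then S is a commutative idempotent semiring with zero element −∞ and identity element 0; S is locally finite (every finitely generated subsemiring of S is finite); and yet there is no pair of natural numbers i < j with a^{⊗i} = a^{⊗j} for all a ∈ S. -/
/-! The addition is `max`, so it is idempotent. Both `max a b` and `min (a + b) 1` have a
denominator dividing `lcm (den a) (den b)`, so every element of the subsemiring generated by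
finitely many elements has denominator dividing the product `N` of their denominators, and there
are only finitely many such rationals in `[0,1]`. On the other hand the powers of `1/j` are
`min (k/j) 1`, which first reach the ceiling `1` at `k = j`: no identity `a^i = a^j` with
`i < j` holds for this element. -/

/-- The rational unit interval `[0,1] ∩ ℚ`. -/
def UnitInterval : Type := {q : ℚ // 0 ≤ q ∧ q ≤ 1}

/-- The set `S = {−∞} ∪ ([0,1] ∩ ℚ)`, with `none` playing the role of `−∞`. -/
def TruncSemiring : Type := Option UnitInterval

namespace TruncSemiring

/-- Addition `x ⊕ y = max (x, y)`, with `−∞` neutral. -/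
def add : TruncSemiring → TruncSemiring → TruncSemiring
  | none, y => y
  | x, none => x
  | some a, some b =>
      some ⟨max a.1 b.1, le_max_of_le_left a.2.1, max_le a.2.2 b.2.2⟩

/-- Multiplication `x ⊗ y = min (x + y, 1)`, with `−∞` absorbing. -/
def mul : TruncSemiring → TruncSemiring → TruncSemiring
  | none, _ => none
  | _, none => none
  | some a, some b =>
      some ⟨min (a.1 + b.1) 1, le_min (add_nonneg a.2.1 b.2.1) zero_le_one,
        min_le_right _ _⟩

instance : Add TruncSemiring := ⟨add⟩
instance : Mul TruncSemiring := ⟨mul⟩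
instance : Zero TruncSemiring := ⟨none⟩
instance : One TruncSemiring := ⟨some ⟨0, le_refl 0, zero_le_one⟩⟩

private lemma trunc_aux (x c : ℚ) (hc : 0 ≤ c) : min (min x 1 + c) 1 = min (x + c) 1 := by
  rcases le_total x 1 with h | h
  · rw [min_eq_left h]
  · rw [min_eq_right h, min_eq_right (le_add_of_nonneg_right hc),
      min_eq_right (le_trans h (le_add_of_nonneg_right hc))]

private lemma dist_aux (a b c : ℚ) :
    min (a + max b c) 1 = max (min (a + b) 1) (min (a + c) 1) := by
  rcases le_total b c with h | h
  · rw [max_eq_right h,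
      max_eq_right (min_le_min (add_le_add le_rfl h) (le_refl 1))]
  · rw [max_eq_left h,
      max_eq_left (min_le_min (add_le_add le_rfl h) (le_refl 1))]

/-- `S` is a commutative (idempotent) semiring with zero `−∞` and identity `0`. -/
instance instCommSemiring : CommSemiring TruncSemiring where
  add := (· + ·)
  zero := 0
  mul := (· * ·)
  one := 1
  nsmul := nsmulRec
  npow := npowRec
  add_assoc := by
    intro a b c
    cases a <;> cases b <;> cases c <;> try rfl
    exact congrArg some (Subtype.ext (max_assoc _ _ _))
  zero_add := by intro a; cases a <;> rfl
  add_zero := by intro a; cases a <;> rfl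
  add_comm := by
    intro a b
    cases a <;> cases b <;> try rfl
    exact congrArg some (Subtype.ext (max_comm _ _))
  mul_assoc := by
    intro a b c
    cases a <;> cases b <;> cases c <;> try rfl
    rename_i x y z
    refine congrArg some (Subtype.ext ?_)
    show min (min (x.1 + y.1) 1 + z.1) 1 = min (x.1 + min (y.1 + z.1) 1) 1
    rw [trunc_aux _ _ z.2.1, add_comm x.1 (min (y.1 + z.1) 1), trunc_aux _ _ x.2.1]
    ring_nf
  one_mul := by
    intro a
    cases a
    · rfl
    · rename_i x
      refine congrArg some (Subtype.ext ?_)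
      show min (0 + x.1) 1 = x.1
      rw [zero_add]
      exact min_eq_left x.2.2
  mul_one := by
    intro a
    cases a
    · rfl
    · rename_i x
      refine congrArg some (Subtype.ext ?_)
      show min (x.1 + 0) 1 = x.1
      rw [add_zero]
      exact min_eq_left x.2.2
  zero_mul := by intro a; cases a <;> rfl
  mul_zero := by intro a; cases a <;> rfl
  left_distrib := by
    intro a b c
    cases a <;> cases b <;> cases c <;> try rfl
    rename_i x y z
    refine congrArg some (Subtype.ext ?_)
    show min (x.1 + max y.1 z.1) 1 = max (min (x.1 + y.1) 1) (min (x.1 + z.1) 1)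
    exact dist_aux _ _ _
  right_distrib := by
    intro a b c
    cases a <;> cases b <;> cases c <;> try rfl
    rename_i x y z
    refine congrArg some (Subtype.ext ?_)
    show min (max x.1 y.1 + z.1) 1 = max (min (x.1 + z.1) 1) (min (y.1 + z.1) 1)
    rw [add_comm (max x.1 y.1) z.1, add_comm x.1 z.1, add_comm y.1 z.1]
    exact dist_aux _ _ _
  mul_comm := by
    intro a b
    cases a <;> cases b <;> try rfl
    refine congrArg some (Subtype.ext ?_)
    exact congrArg (fun t => min t 1) (add_comm _ _)

theorem add_self (a : TruncSemiring) : a + a = a := by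
  rcases a with _ | a
  · rfl
  · exact congrArg some (Subtype.ext (max_self _))

abbrev mk (q : ℚ) (h0 : 0 ≤ q) (h1 : q ≤ 1) : TruncSemiring := some ⟨q, h0, h1⟩

theorem mk_pow (q : ℚ) (h0 : 0 ≤ q) (h1 : q ≤ 1) (k : ℕ) :
    mk q h0 h1 ^ k =
      mk (min (k * q) 1) (le_min (by positivity) zero_le_one) (min_le_right _ _) := by
  induction k with
  | zero => exact congrArg some (Subtype.ext (by simp))
  | succ k ih =>
    rw [pow_succ, ih]
    refine congrArg some (Subtype.ext ?_)
    show min (min (k * q) 1 + q) 1 = min ((k + 1 : ℕ) * q) 1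
    rw [trunc_aux _ _ h0]
    push_cast
    ring_nf

theorem exists_pow_ne_pow {i j : ℕ} (hij : i < j) : ∃ a : TruncSemiring, a ^ i ≠ a ^ j := by
  have hj : (0 : ℚ) < j := by exact_mod_cast i.zero_le.trans_lt hij
  have hinv : (j : ℚ)⁻¹ ≤ 1 := inv_le_one_of_one_le₀ (by exact_mod_cast hij.pos)
  refine ⟨mk (j : ℚ)⁻¹ (inv_nonneg.2 hj.le) hinv, fun h => ?_⟩
  rw [mk_pow, mk_pow] at h
  have hval : min (i * (j : ℚ)⁻¹) 1 = min (j * (j : ℚ)⁻¹) 1 :=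
    congrArg Subtype.val (Option.some.inj h)
  have hi : (i : ℚ) * (j : ℚ)⁻¹ < 1 := by
    rw [← div_eq_mul_inv, div_lt_one hj]
    exact_mod_cast hij
  rw [mul_inv_cancel₀ hj.ne', min_self, min_eq_left hi.le] at hval
  exact hi.ne hval

theorem _root_.Rat.finite_setOf_den_dvd {N : ℕ} (hN : N ≠ 0) :
    {q : ℚ | 0 ≤ q ∧ q ≤ 1 ∧ q.den ∣ N}.Finite := by
  refine Set.Finite.of_finite_image (f := fun q : ℚ => (q.num, q.den)) ?_
    fun p _ q _ h => Rat.ext (congrArg Prod.fst h) (congrArg Prod.snd h)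
  refine ((Set.finite_Icc (0 : ℤ) N).prod (Set.finite_Iic N)).subset ?_
  rintro _ ⟨q, ⟨hq0, hq1, hqN⟩, rfl⟩
  have hden : q.den ≤ N := Nat.le_of_dvd (Nat.pos_of_ne_zero hN) hqN
  exact ⟨⟨Rat.num_nonneg.2 hq0, (Rat.num_le_denom_iff.2 hq1).trans (by exact_mod_cast hden)⟩,
    hden⟩

def den : TruncSemiring → ℕ
  | none => 1
  | some a => a.1.den

theorem den_pos (x : TruncSemiring) : 0 < den x := by
  rcases x with _ | a
  exacts [Nat.one_pos, a.1.den_pos]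

theorem den_add_dvd_lcm (x y : TruncSemiring) : den (x + y) ∣ (den x).lcm (den y) := by
  rcases x with _ | a <;> rcases y with _ | b
  · exact one_dvd _
  · exact Nat.dvd_lcm_right _ _
  · exact Nat.dvd_lcm_left _ _
  · show (max a.1 b.1).den ∣ _
    rcases max_choice a.1 b.1 with h | h <;> rw [h]
    exacts [Nat.dvd_lcm_left _ _, Nat.dvd_lcm_right _ _]

theorem den_mul_dvd_lcm (x y : TruncSemiring) : den (x * y) ∣ (den x).lcm (den y) := by
  rcases x with _ | a <;> rcases y with _ | b
  · exact one_dvd _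
  · exact one_dvd _
  · exact one_dvd _
  · show (min (a.1 + b.1) 1).den ∣ _
    rcases min_choice (a.1 + b.1) 1 with h | h <;> rw [h]
    exacts [Rat.add_den_dvd_lcm _ _, by simp]

def denDvdSubsemiring (N : ℕ) : Subsemiring TruncSemiring where
  carrier := {x | den x ∣ N}
  zero_mem' := one_dvd N
  one_mem' := one_dvd N
  add_mem' hx hy := (den_add_dvd_lcm _ _).trans (Nat.lcm_dvd hx hy)
  mul_mem' hx hy := (den_mul_dvd_lcm _ _).trans (Nat.lcm_dvd hx hy)

theorem finite_denDvdSubsemiring {N : ℕ} (hN : N ≠ 0) :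
    (denDvdSubsemiring N : Set TruncSemiring).Finite := by
  refine ((((Rat.finite_setOf_den_dvd hN).preimage Subtype.val_injective.injOn).image
    some).insert none).subset ?_
  rintro (_ | a) h
  · exact Set.mem_insert _ _
  · exact Set.mem_insert_of_mem _ ⟨a, ⟨a.2.1, a.2.2, h⟩, rfl⟩

theorem finite_closure {s : Set TruncSemiring} (hs : s.Finite) :
    (Subsemiring.closure s : Set TruncSemiring).Finite := by
  set N := ∏ x ∈ hs.toFinset, den x
  have hN : N ≠ 0 := Finset.prod_ne_zero_iff.2 fun x _ => (den_pos x).ne'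
  have hle : Subsemiring.closure s ≤ denDvdSubsemiring N :=
    Subsemiring.closure_le.2 fun x hx => Finset.dvd_prod_of_mem den (hs.mem_toFinset.2 hx)
  exact (finite_denDvdSubsemiring hN).subset hle

/-- **Statement 18.** `S = {−∞} ∪ ([0,1] ∩ ℚ)` with `x ⊕ y = max(x,y)` and
`x ⊗ y = min(x+y,1)` is a commutative idempotent semiring with zero `−∞` and one `0`;
it is locally finite, and yet it satisfies no multiplicative torsion identity
`a^i = a^j` with `i < j`. -/
theorem truncSemiring_locally_finite_no_torsion :
    (∀ a : TruncSemiring, a + a = a) ∧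
    ((0 : TruncSemiring) = none) ∧
    ((1 : TruncSemiring) = some ⟨0, le_refl 0, zero_le_one⟩) ∧
    (∀ F : Finset TruncSemiring,
      (Subsemiring.closure (F : Set TruncSemiring) : Set TruncSemiring).Finite) ∧
    ¬ ∃ i j : ℕ, i < j ∧ ∀ a : TruncSemiring, a ^ i = a ^ j := by
  refine ⟨add_self, rfl, rfl, fun F => finite_closure F.finite_toSet, ?_⟩
  rintro ⟨i, j, hij, h⟩
  obtain ⟨a, ha⟩ := exists_pow_ne_pow hij
  exact ha (h a)

end TruncSemiring
end
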